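/- arXiv:0710.1163 — 9 statements merged into one kernel-verified Lean document; each statement's English description precedes it below -/
import Mathlib

section
/- If the natural transformation γ = Hm ∘ δH : HH → HH of a bimonad H admits a left inverse β that is H-linear (as a morphism of the left H-module (HH, Hm)), then S = εH ∘ β ∘ He : H → H is a left antipode, i.e., m ∘ SH ∘ δ = e ∘ ε. -/
open CategoryTheory

universe v u

variable {A : Type u} [Category.{v} A]

/-- `(H, m, e)` is a monad on `A` (stated componentwise). -/
structure IsMonadOn (H : A ⥤ A) (m : H ⋙ H ⟶ H) (e : 𝟭 A ⟶ H) : Prop where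
  assoc : ∀ a : A, H.map (m.app a) ≫ m.app a = m.app (H.obj a) ≫ m.app a
  unit_left : ∀ a : A, e.app (H.obj a) ≫ m.app a = 𝟙 (H.obj a)
  unit_right : ∀ a : A, H.map (e.app a) ≫ m.app a = 𝟙 (H.obj a)

/-- `(H, δ, ε)` is a comonad on `A` (stated componentwise). -/
structure IsComonadOn (H : A ⥤ A) (δ : H ⟶ H ⋙ H) (ε : H ⟶ 𝟭 A) : Prop where
  coassoc : ∀ a : A, δ.app a ≫ H.map (δ.app a) = δ.app a ≫ δ.app (H.obj a)
  counit_left : ∀ a : A, δ.app a ≫ ε.app (H.obj a) = 𝟙 (H.obj a)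
  counit_right : ∀ a : A, δ.app a ≫ H.map (ε.app a) = 𝟙 (H.obj a)

/-- `(H, m, e, δ, ε, lam)` is a bimonad on `A`: a monad and a comonad such that `ε` is a
monad morphism to the identity monad, `e` is a comonad morphism from the identity comonad,
and `lam : HH ⟶ HH` is a mixed distributive law (entwining) from the monad to the comonad
satisfying `δ ∘ m = Hm ∘ lam H ∘ Hδ`. -/
structure IsBimonadOn (H : A ⥤ A) (m : H ⋙ H ⟶ H) (e : 𝟭 A ⟶ H)
    (δ : H ⟶ H ⋙ H) (ε : H ⟶ 𝟭 A) (lam : H ⋙ H ⟶ H ⋙ H) : Prop where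
  monad : IsMonadOn H m e
  comonad : IsComonadOn H δ ε
  ent_unit : ∀ a : A, e.app (H.obj a) ≫ lam.app a = H.map (e.app a)
  ent_counit : ∀ a : A, lam.app a ≫ ε.app (H.obj a) = H.map (ε.app a)
  ent_delta : ∀ a : A, lam.app a ≫ δ.app (H.obj a)
      = H.map (δ.app a) ≫ lam.app (H.obj a) ≫ H.map (lam.app a)
  ent_mul : ∀ a : A, m.app (H.obj a) ≫ lam.app a
      = H.map (lam.app a) ≫ lam.app (H.obj a) ≫ H.map (m.app a)
  compat : ∀ a : A, m.app a ≫ δ.app a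
      = H.map (δ.app a) ≫ lam.app (H.obj a) ≫ H.map (m.app a)
  counit_monad : ∀ a : A, m.app a ≫ ε.app a = H.map (ε.app a) ≫ ε.app a
  unit_comonad : ∀ a : A, e.app a ≫ δ.app a = e.app a ≫ e.app (H.obj a)
  counit_unit : ∀ a : A, e.app a ≫ ε.app a = 𝟙 a

/-- If `γ = Hm ∘ δH` admits an `H`-linear left inverse `β` (as a morphism of
the left `H`-module `(HH, Hm)`), then `S = εH ∘ β ∘ He` is a left antipode:
`m ∘ SH ∘ δ = e ∘ ε`. -/
theorem stmt9 (H : A ⥤ A) (m : H ⋙ H ⟶ H) (e : 𝟭 A ⟶ H)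
    (δ : H ⟶ H ⋙ H) (ε : H ⟶ 𝟭 A) (lam : H ⋙ H ⟶ H ⋙ H)
    (hB : IsBimonadOn H m e δ ε lam)
    (β : H ⋙ H ⟶ H ⋙ H)
    (hlin : ∀ a : A, β.app (H.obj a) ≫ H.map (m.app a) = H.map (m.app a) ≫ β.app a)
    (hinv : ∀ a : A, (δ.app (H.obj a) ≫ H.map (m.app a)) ≫ β.app a = 𝟙 (H.obj (H.obj a))) :
    ∀ a : A, δ.app a ≫
        (H.map (e.app (H.obj a)) ≫ β.app (H.obj a) ≫ ε.app (H.obj (H.obj a))) ≫ m.app a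
      = ε.app a ≫ e.app a := by
  intro a
  have hεm := ε.naturality (m.app a)
  have hεe := ε.naturality (e.app a)
  have hδe := δ.naturality (e.app a)
  simp only [Functor.id_obj, Functor.id_map, Functor.comp_obj, Functor.comp_map] at hεm hεe hδe
  have hγ : H.map (e.app a) ≫ δ.app (H.obj a) ≫ H.map (m.app a) = δ.app a := by
    rw [← Category.assoc, hδe, Category.assoc, ← H.map_comp, hB.monad.unit_right a,
      H.map_id, Category.comp_id]
  have hδβ : δ.app a ≫ β.app a = H.map (e.app a) := by
    rw [← hγ, Category.assoc, Category.assoc, ← Category.assoc (δ.app (H.obj a)), hinv a,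
      Category.comp_id]
  calc δ.app a ≫ (H.map (e.app (H.obj a)) ≫ β.app (H.obj a) ≫ ε.app (H.obj (H.obj a))) ≫ m.app a
      = δ.app a ≫ H.map (e.app (H.obj a)) ≫ β.app (H.obj a) ≫ H.map (m.app a) ≫ ε.app (H.obj a) := by
        simp only [Category.assoc]
        rw [← hεm]
    _ = δ.app a ≫ H.map (e.app (H.obj a)) ≫ H.map (m.app a) ≫ β.app a ≫ ε.app (H.obj a) := by
        rw [← Category.assoc (β.app (H.obj a)), hlin a, Category.assoc]
    _ = δ.app a ≫ β.app a ≫ ε.app (H.obj a) := by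
        rw [← Category.assoc (H.map _), ← H.map_comp, hB.monad.unit_left a, H.map_id,
          Category.id_comp]
    _ = ε.app a ≫ e.app a := by
        rw [← Category.assoc, hδβ, hεe]
end

section
/- For a bimonad H = (H, m, e, δ, ε, λ) on a category A, the following are equivalent: (a) γ = Hm ∘ δH : HH → HH is an isomorphism; (b) γ' = mH ∘ Hδ : HH → HH is an isomorphism; (c) H has an antipode, i.e., a natural transformation S : H → H with m ∘ SH ∘ δ = e ∘ ε = m ∘ HS ∘ δ. -/
/-!
Write `γ = Hm ∘ δH`. For any `μ, ν : HH → H`, coassociativity gives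
`(Hν ∘ δH) ∘ (Hμ ∘ δH) = H(ν ∘ Hμ ∘ δH) ∘ δH`, and by the counit laws this is the identity
exactly when `ν ∘ Hμ ∘ δH = εH`. With `β = H(m ∘ SH) ∘ δH`, the two antipode equations are
therefore equivalent to `β ∘ γ = 1` and `γ ∘ β = 1` (evaluate at `H a` in one direction,
precompose with `He` in the other). Conversely, if `γ` is invertible, put
`S = εH ∘ γ⁻¹ ∘ He`. Since `γ⁻¹` is left `H`-linear and `γ⁻¹ ∘ δ = He`, the first antipode
equation holds directly; so `β` is a one-sided, hence two-sided, inverse of `γ`, which gives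
the second.

In `Aᵒᵖ` the roles of `(m, e)` and `(δ, ε)` are exchanged, `γ' = mH ∘ Hδ` becomes the `γ` of
this opposite structure, and the antipode equations are self-dual, so the claims about `γ'`
follow from those about `γ`.
-/

open CategoryTheory

universe v u

variable {A : Type u} [Category.{v} A]

section Comonad

variable {H : A ⥤ A} {δ : H ⟶ H ⋙ H} {ε : H ⟶ 𝟭 A}

def canonicalMap (δ : H ⟶ H ⋙ H) (μ : H ⋙ H ⟶ H) : H ⋙ H ⟶ H ⋙ H :=
  Functor.whiskerLeft H δ ≫ Functor.whiskerRight μ H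

theorem canonicalMap_app (μ : H ⋙ H ⟶ H) (a : A) :
    (canonicalMap δ μ).app a = δ.app (H.obj a) ≫ H.map (μ.app a) := rfl

theorem IsComonadOn.eq_counit_of_comul_comp_map_eq_id (hC : IsComonadOn H δ ε) {X : A}
    {f : H.obj X ⟶ X} (hf : δ.app X ≫ H.map f = 𝟙 _) : f = ε.app X := by
  have hε : H.map f ≫ ε.app X = ε.app (H.obj X) ≫ f := ε.naturality f
  rw [← Category.id_comp f, ← hC.counit_left X, Category.assoc, ← hε, reassoc_of% hf]

theorem IsComonadOn.canonicalMap_comp_app (hC : IsComonadOn H δ ε) (μ ν : H ⋙ H ⟶ H) (a : A) :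
    (canonicalMap δ μ ≫ canonicalMap δ ν).app a
      = δ.app (H.obj a) ≫ H.map (δ.app (H.obj a) ≫ H.map (μ.app a) ≫ ν.app a) := by
  have hδ := reassoc_of% (δ.naturality (μ.app a))
  simp only [NatTrans.comp_app, canonicalMap_app, Category.assoc, Functor.comp_obj] at hδ ⊢
  rw [hδ, ← reassoc_of% hC.coassoc (H.obj a), Functor.map_comp, Functor.map_comp]

theorem IsComonadOn.canonicalMap_comp_eq_id_iff (hC : IsComonadOn H δ ε) (μ ν : H ⋙ H ⟶ H) :
    canonicalMap δ μ ≫ canonicalMap δ ν = 𝟙 _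
      ↔ ∀ a, δ.app (H.obj a) ≫ H.map (μ.app a) ≫ ν.app a = ε.app (H.obj a) := by
  refine ⟨fun h a ↦ hC.eq_counit_of_comul_comp_map_eq_id ?_, fun h ↦ ?_⟩
  · simpa only [hC.canonicalMap_comp_app, NatTrans.id_app, Functor.comp_obj] using
      NatTrans.congr_app h a
  · ext a
    rw [hC.canonicalMap_comp_app, h, hC.counit_right]
    rfl

end Comonad

section Bimonad

variable {H : A ⥤ A} {m : H ⋙ H ⟶ H} {e : 𝟭 A ⟶ H} {δ : H ⟶ H ⋙ H} {ε : H ⟶ 𝟭 A}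

def IsAntipode (m : H ⋙ H ⟶ H) (e : 𝟭 A ⟶ H) (δ : H ⟶ H ⋙ H) (ε : H ⟶ 𝟭 A) (S : H ⟶ H) :
    Prop :=
  (∀ a, δ.app a ≫ S.app (H.obj a) ≫ m.app a = ε.app a ≫ e.app a) ∧
    (∀ a, δ.app a ≫ H.map (S.app a) ≫ m.app a = ε.app a ≫ e.app a)

theorem map_comp_canonicalMap_app (μ : H ⋙ H ⟶ H) {X a : A} (f : X ⟶ H.obj a) :
    H.map f ≫ (canonicalMap δ μ).app a = δ.app X ≫ H.map (H.map f ≫ μ.app a) := by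
  rw [canonicalMap_app, reassoc_of% (δ.naturality f), H.map_comp]

theorem IsMonadOn.map_unit_comp_canonicalMap_app (hM : IsMonadOn H m e) (a : A) :
    H.map (e.app a) ≫ (canonicalMap δ m).app a = δ.app a := by
  rw [map_comp_canonicalMap_app, hM.unit_right]
  erw [H.map_id]
  exact Category.comp_id _

theorem IsMonadOn.map_mul_comp_canonicalMap_app (hM : IsMonadOn H m e) (a : A) :
    H.map (m.app a) ≫ (canonicalMap δ m).app a
      = (canonicalMap δ m).app (H.obj a) ≫ H.map (m.app a) := by
  rw [map_comp_canonicalMap_app, hM.assoc, H.map_comp, canonicalMap_app, Category.assoc]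
  rfl

theorem antipode_left_iff (hM : IsMonadOn H m e) (hC : IsComonadOn H δ ε) (S : H ⟶ H) :
    (∀ a, δ.app a ≫ S.app (H.obj a) ≫ m.app a = ε.app a ≫ e.app a)
      ↔ canonicalMap δ m ≫ canonicalMap δ (Functor.whiskerLeft H S ≫ m) = 𝟙 _ := by
  rw [hC.canonicalMap_comp_eq_id_iff]
  refine ⟨fun hS a ↦ ?_, fun h a ↦ ?_⟩
  · rw [NatTrans.comp_app, Functor.whiskerLeft_app, reassoc_of% (S.naturality (m.app a)),
      hM.assoc, reassoc_of% (hS (H.obj a)), hM.unit_left, Category.comp_id]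
  · calc δ.app a ≫ S.app (H.obj a) ≫ m.app a
        = H.map (e.app a) ≫ δ.app (H.obj a) ≫ H.map (m.app a) ≫ S.app (H.obj a) ≫ m.app a := by
          rw [← reassoc_of% (hM.map_unit_comp_canonicalMap_app (δ := δ) a), canonicalMap_app,
            Category.assoc]
      _ = H.map (e.app a) ≫ ε.app (H.obj a) := by rw [← h a]; rfl
      _ = ε.app a ≫ e.app a := ε.naturality (e.app a)

theorem antipode_right_iff (hM : IsMonadOn H m e) (hC : IsComonadOn H δ ε) (S : H ⟶ H) :
    (∀ a, δ.app a ≫ H.map (S.app a) ≫ m.app a = ε.app a ≫ e.app a)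
      ↔ canonicalMap δ (Functor.whiskerLeft H S ≫ m) ≫ canonicalMap δ m = 𝟙 _ := by
  rw [hC.canonicalMap_comp_eq_id_iff]
  refine ⟨fun hS a ↦ ?_, fun h a ↦ ?_⟩
  · rw [NatTrans.comp_app, Functor.whiskerLeft_app, Functor.map_comp, Category.assoc,
      hM.assoc, reassoc_of% (hS (H.obj a)), hM.unit_left, Category.comp_id]
  · have hSe : H.map (e.app a) ≫ S.app (H.obj a) ≫ m.app a = S.app a := by
      rw [reassoc_of% (S.naturality (e.app a)), hM.unit_right, Category.comp_id]
    calc δ.app a ≫ H.map (S.app a) ≫ m.app a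
        = H.map (e.app a) ≫ (canonicalMap δ (Functor.whiskerLeft H S ≫ m)).app a ≫ m.app a := by
          rw [reassoc_of% map_comp_canonicalMap_app, NatTrans.comp_app, Functor.whiskerLeft_app, hSe]
          rfl
      _ = H.map (e.app a) ≫ ε.app (H.obj a) := by rw [canonicalMap_app, Category.assoc, h a]
      _ = ε.app a ≫ e.app a := ε.naturality (e.app a)

theorem exists_antipode_of_isIso_canonicalMap (hM : IsMonadOn H m e) (hC : IsComonadOn H δ ε)
    [IsIso (canonicalMap δ m)] : ∃ S, IsAntipode m e δ ε S := by
  set γ := canonicalMap δ m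
  let S : H ⟶ H := (Functor.leftUnitor H).inv ≫ Functor.whiskerRight e H ≫ inv γ ≫
    Functor.whiskerLeft H ε ≫ (Functor.rightUnitor H).hom
  have hS : ∀ a, S.app a = H.map (e.app a) ≫ inv (γ.app a) ≫ ε.app (H.obj a) := by
    simp [S]
  have hleft : ∀ a, δ.app a ≫ S.app (H.obj a) ≫ m.app a = ε.app a ≫ e.app a := by
    intro a
    have hinv_mul : inv (γ.app (H.obj a)) ≫ H.map (m.app a) = H.map (m.app a) ≫ inv (γ.app a) := by
      rw [IsIso.inv_comp_eq, ← reassoc_of% hM.map_mul_comp_canonicalMap_app, IsIso.hom_inv_id,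
        Category.comp_id]
    have hunit : δ.app a ≫ inv (γ.app a) = H.map (e.app a) := by
      rw [IsIso.comp_inv_eq, hM.map_unit_comp_canonicalMap_app]
    have hε : ε.app (H.obj (H.obj a)) ≫ m.app a = H.map (m.app a) ≫ ε.app (H.obj a) :=
      (ε.naturality (m.app a)).symm
    rw [hS, Category.assoc, Category.assoc, hε, reassoc_of% hinv_mul, ← H.map_comp_assoc,
      hM.unit_left]
    erw [H.map_id, Category.id_comp, reassoc_of% hunit]
    exact ε.naturality (e.app a)
  have hinv := (antipode_left_iff hM hC S).mp hleft
  refine ⟨S, hleft, (antipode_right_iff hM hC S).mpr ?_⟩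
  rw [← IsIso.inv_eq_of_hom_inv_id hinv, IsIso.inv_hom_id]

theorem isIso_canonicalMap_iff_exists_antipode (hM : IsMonadOn H m e) (hC : IsComonadOn H δ ε) :
    IsIso (canonicalMap δ m) ↔ ∃ S, IsAntipode m e δ ε S :=
  ⟨fun _ ↦ exists_antipode_of_isIso_canonicalMap hM hC, fun ⟨S, hl, hr⟩ ↦
    ⟨⟨_, (antipode_left_iff hM hC S).mp hl, (antipode_right_iff hM hC S).mp hr⟩⟩⟩

end Bimonad

section Opposite

variable {H : A ⥤ A} {m : H ⋙ H ⟶ H} {e : 𝟭 A ⟶ H} {δ : H ⟶ H ⋙ H} {ε : H ⟶ 𝟭 A}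

theorem IsComonadOn.op (hC : IsComonadOn H δ ε) :
    IsMonadOn H.op (NatTrans.op δ) (NatTrans.op ε) where
  assoc a := Quiver.Hom.unop_inj (hC.coassoc a.unop)
  unit_left a := Quiver.Hom.unop_inj (hC.counit_left a.unop)
  unit_right a := Quiver.Hom.unop_inj (hC.counit_right a.unop)

theorem IsMonadOn.op (hM : IsMonadOn H m e) :
    IsComonadOn H.op (NatTrans.op m) (NatTrans.op e) where
  coassoc a := Quiver.Hom.unop_inj (hM.assoc a.unop)
  counit_left a := Quiver.Hom.unop_inj (hM.unit_left a.unop)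
  counit_right a := Quiver.Hom.unop_inj (hM.unit_right a.unop)

theorem isIso_canonicalMap_op_iff :
    IsIso (canonicalMap (NatTrans.op m) (NatTrans.op δ))
      ↔ ∀ a, IsIso (H.map (δ.app a) ≫ m.app (H.obj a)) := by
  rw [NatTrans.isIso_iff_isIso_app, Opposite.op_surjective.forall]
  exact forall_congr' fun a ↦ isIso_op_iff _

theorem isAntipode_op_iff (S : H ⟶ H) :
    IsAntipode (NatTrans.op δ) (NatTrans.op ε) (NatTrans.op m) (NatTrans.op e) (NatTrans.op S)
      ↔ IsAntipode m e δ ε S := by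
  refine and_congr ⟨fun h a ↦ ?_, fun h a ↦ ?_⟩ ⟨fun h a ↦ ?_, fun h a ↦ ?_⟩
  · simpa using congrArg Quiver.Hom.unop (h (Opposite.op a))
  · simpa using congrArg Quiver.Hom.op (h a.unop)
  · simpa using congrArg Quiver.Hom.unop (h (Opposite.op a))
  · simpa using congrArg Quiver.Hom.op (h a.unop)

theorem exists_antipode_op_iff :
    (∃ S, IsAntipode (NatTrans.op δ) (NatTrans.op ε) (NatTrans.op m) (NatTrans.op e) S)
      ↔ ∃ S, IsAntipode m e δ ε S :=
  ⟨fun ⟨S, h⟩ ↦ ⟨NatTrans.removeOp S, (isAntipode_op_iff _).mp h⟩,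
    fun ⟨S, h⟩ ↦ ⟨NatTrans.op S, (isAntipode_op_iff S).mpr h⟩⟩

end Opposite

/-- For a bimonad `H`, the following are equivalent: `γ = Hm ∘ δH` is an
isomorphism; `γ' = mH ∘ Hδ` is an isomorphism; `H` has an antipode `S`
(`m ∘ SH ∘ δ = e ∘ ε = m ∘ HS ∘ δ`). -/
theorem stmt10 (H : A ⥤ A) (m : H ⋙ H ⟶ H) (e : 𝟭 A ⟶ H)
    (δ : H ⟶ H ⋙ H) (ε : H ⟶ 𝟭 A) (lam : H ⋙ H ⟶ H ⋙ H)
    (hB : IsBimonadOn H m e δ ε lam) :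
    ((∀ a : A, IsIso (δ.app (H.obj a) ≫ H.map (m.app a)))
      ↔ (∀ a : A, IsIso (H.map (δ.app a) ≫ m.app (H.obj a)))) ∧
    ((∀ a : A, IsIso (δ.app (H.obj a) ≫ H.map (m.app a)))
      ↔ ∃ S : H ⟶ H,
          (∀ a : A, δ.app a ≫ S.app (H.obj a) ≫ m.app a = ε.app a ≫ e.app a) ∧
          (∀ a : A, δ.app a ≫ H.map (S.app a) ≫ m.app a = ε.app a ≫ e.app a)) := by
  have hγ : (∀ a, IsIso (δ.app (H.obj a) ≫ H.map (m.app a))) ↔ ∃ S, IsAntipode m e δ ε S :=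
    (NatTrans.isIso_iff_isIso_app _).symm.trans
      (isIso_canonicalMap_iff_exists_antipode hB.monad hB.comonad)
  have hγ' : (∀ a, IsIso (H.map (δ.app a) ≫ m.app (H.obj a))) ↔ ∃ S, IsAntipode m e δ ε S :=
    isIso_canonicalMap_op_iff.symm.trans
      ((isIso_canonicalMap_iff_exists_antipode hB.comonad.op hB.monad.op).trans
        exists_antipode_op_iff)
  exact ⟨hγ.trans hγ'.symm, hγ⟩
end

section
/- If a bimonad H has both a left antipode S (m ∘ SH ∘ δ = e∘ε) and a right antipode S' (m ∘ HS' ∘ δ = e∘ε), and γ = Hm∘δH is an epimorphism, then S = S', so H has an antipode. -/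
/-! `S` and `S'` are a left and a right inverse of the identity for the convolution product
`f ⋆ g = m ∘ Hg ∘ fH ∘ δ` on `H ⟶ H`, which is associative with unit `e ∘ ε`; hence
`S = S ⋆ (id ⋆ S') = (S ⋆ id) ⋆ S' = S'`. -/

open CategoryTheory

universe v u

variable {A : Type u} [Category.{v} A]

section Convolution

variable {H : A ⥤ A} {m : H ⋙ H ⟶ H} {e : 𝟭 A ⟶ H} {δ : H ⟶ H ⋙ H}
  {ε : H ⟶ 𝟭 A}

variable (m δ) in
def convolution (f g : H ⟶ H) : H ⟶ H :=
  δ ≫ Functor.whiskerLeft H f ≫ Functor.whiskerRight g H ≫ m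

@[simp]
lemma convolution_app (f g : H ⟶ H) (a : A) :
    (convolution m δ f g).app a = δ.app a ≫ f.app (H.obj a) ≫ H.map (g.app a) ≫ m.app a :=
  rfl

lemma convolution_assoc (hM : IsMonadOn H m e) (hC : IsComonadOn H δ ε) (f g k : H ⟶ H) :
    convolution m δ (convolution m δ f g) k = convolution m δ f (convolution m δ g k) := by
  ext a
  have hf := f.naturality (δ.app a)
  have hm := m.naturality (k.app a)
  simp only [Functor.comp_obj, Functor.comp_map] at hf hm
  simp only [convolution_app, Functor.map_comp, Category.assoc]
  rw [← reassoc_of% hf, reassoc_of% hC.coassoc a, hM.assoc, reassoc_of% hm]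

lemma counit_comp_unit_convolution (hM : IsMonadOn H m e) (hC : IsComonadOn H δ ε) (f : H ⟶ H) :
    convolution m δ (ε ≫ e) f = f := by
  ext a
  have he := e.naturality (f.app a)
  simp only [Functor.id_obj, Functor.id_map] at he
  simp only [convolution_app, NatTrans.comp_app, Category.assoc]
  rw [reassoc_of% hC.counit_left a, ← reassoc_of% he, hM.unit_left, Category.comp_id]

lemma convolution_counit_comp_unit (hM : IsMonadOn H m e) (hC : IsComonadOn H δ ε) (f : H ⟶ H) :
    convolution m δ f (ε ≫ e) = f := by
  ext a
  have hf := f.naturality (ε.app a)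
  simp only [Functor.id_obj] at hf
  simp only [convolution_app, NatTrans.comp_app, Functor.map_comp, Category.assoc, hM.unit_right,
    Functor.id_obj, Category.comp_id]
  rw [← hf, reassoc_of% hC.counit_right a]

end Convolution

theorem stmt11_general (H : A ⥤ A) (m : H ⋙ H ⟶ H) (e : 𝟭 A ⟶ H)
    (δ : H ⟶ H ⋙ H) (ε : H ⟶ 𝟭 A) (lam : H ⋙ H ⟶ H ⋙ H)
    (hB : IsBimonadOn H m e δ ε lam)
    (S S' : H ⟶ H)
    (hS : ∀ a : A, δ.app a ≫ S.app (H.obj a) ≫ m.app a = ε.app a ≫ e.app a)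
    (hS' : ∀ a : A, δ.app a ≫ H.map (S'.app a) ≫ m.app a = ε.app a ≫ e.app a) :
    S = S' := by
  have hM := hB.monad
  have hC := hB.comonad
  have hSleft : convolution m δ S (𝟙 H) = ε ≫ e := by ext a; simpa using hS a
  have hSright : convolution m δ (𝟙 H) S' = ε ≫ e := by ext a; simpa using hS' a
  calc S = convolution m δ S (convolution m δ (𝟙 H) S') := by
        rw [hSright, convolution_counit_comp_unit hM hC]
    _ = convolution m δ (convolution m δ S (𝟙 H)) S' := (convolution_assoc hM hC ..).symm
    _ = S' := by rw [hSleft, counit_comp_unit_convolution hM hC]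

/-- If a bimonad `H` has a left antipode `S` and a right antipode `S'`, and
`γ = Hm ∘ δH` is an epimorphism, then `S = S'`, so `H` has an antipode. -/
theorem stmt11 (H : A ⥤ A) (m : H ⋙ H ⟶ H) (e : 𝟭 A ⟶ H)
    (δ : H ⟶ H ⋙ H) (ε : H ⟶ 𝟭 A) (lam : H ⋙ H ⟶ H ⋙ H)
    (hB : IsBimonadOn H m e δ ε lam)
    (hγ : Epi (Functor.whiskerLeft H δ ≫ Functor.whiskerRight m H : H ⋙ H ⟶ H ⋙ H))
    (S S' : H ⟶ H)
    (hS : ∀ a : A, δ.app a ≫ S.app (H.obj a) ≫ m.app a = ε.app a ≫ e.app a)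
    (hS' : ∀ a : A, δ.app a ≫ H.map (S'.app a) ≫ m.app a = ε.app a ≫ e.app a) :
    S = S' :=
  stmt11_general H m e δ ε lam hB S S' hS hS'
end

section
/- Let τ : HH → HH be a double entwining making H a τ-bimonad. Then the composite τ̃ = mH ∘ Hτ ∘ δH : HH → HH is a mixed distributive law from the monad (H, m, e) to the comonad (H, δ, ε); in particular H is a bimonad with entwining τ̃. -/
/-! `τ̃ = mH ∘ Hτ ∘ δH` is `τ` sandwiched between a comultiplication and a multiplication, so
its unit and counit laws reduce to those of `τ` via `δ ∘ e = eH ∘ e` and `ε ∘ m = ε ∘ Hε`.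
In the laws of `τ̃` against `δ` and against `m`, the composite `δH ∘ mH` appears once and is
expanded by the bimonad compatibility `δ ∘ m = mm ∘ HτH ∘ δδ`; what remains is closed by the
matching entwining laws of `τ` in both directions, together with (co)associativity. -/

open CategoryTheory

universe v u

variable {A : Type u} [Category.{v} A]

/-- `τ : HH ⟶ HH` is a double entwining: a mixed distributive law from the monad
`(H, m, e)` to the comonad `(H, δ, ε)` and also one from the comonad to the monad. -/
structure IsDoubleEntwining (H : A ⥤ A) (m : H ⋙ H ⟶ H) (e : 𝟭 A ⟶ H)
    (δ : H ⟶ H ⋙ H) (ε : H ⟶ 𝟭 A) (τ : H ⋙ H ⟶ H ⋙ H) : Prop where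
  mc_unit : ∀ a : A, e.app (H.obj a) ≫ τ.app a = H.map (e.app a)
  mc_counit : ∀ a : A, τ.app a ≫ ε.app (H.obj a) = H.map (ε.app a)
  mc_delta : ∀ a : A, τ.app a ≫ δ.app (H.obj a)
      = H.map (δ.app a) ≫ τ.app (H.obj a) ≫ H.map (τ.app a)
  mc_mul : ∀ a : A, m.app (H.obj a) ≫ τ.app a
      = H.map (τ.app a) ≫ τ.app (H.obj a) ≫ H.map (m.app a)
  cm_unit : ∀ a : A, H.map (e.app a) ≫ τ.app a = e.app (H.obj a)
  cm_counit : ∀ a : A, τ.app a ≫ H.map (ε.app a) = ε.app (H.obj a)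
  cm_delta : ∀ a : A, τ.app a ≫ H.map (δ.app a)
      = δ.app (H.obj a) ≫ H.map (τ.app a) ≫ τ.app (H.obj a)
  cm_mul : ∀ a : A, H.map (m.app a) ≫ τ.app a
      = τ.app (H.obj a) ≫ H.map (τ.app a) ≫ m.app (H.obj a)

/-- `H` is a `τ`-bimonad: a monad and a comonad with a double entwining `τ` such that
`δ ∘ m = mm ∘ HτH ∘ δδ`, `ε ∘ m = ε ∘ Hε`, `δ ∘ e = eH ∘ e` and `ε ∘ e = 1`. -/
structure IsTauBimonadOn (H : A ⥤ A) (m : H ⋙ H ⟶ H) (e : 𝟭 A ⟶ H)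
    (δ : H ⟶ H ⋙ H) (ε : H ⟶ 𝟭 A) (τ : H ⋙ H ⟶ H ⋙ H) : Prop where
  monad : IsMonadOn H m e
  comonad : IsComonadOn H δ ε
  ent : IsDoubleEntwining H m e δ ε τ
  compat : ∀ a : A, m.app a ≫ δ.app a
      = δ.app (H.obj a) ≫ H.map (H.map (δ.app a)) ≫ H.map (τ.app (H.obj a))
          ≫ m.app (H.obj (H.obj a)) ≫ H.map (m.app a)
  counit_monad : ∀ a : A, m.app a ≫ ε.app a = H.map (ε.app a) ≫ ε.app a
  unit_comonad : ∀ a : A, e.app a ≫ δ.app a = e.app a ≫ e.app (H.obj a)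
  counit_unit : ∀ a : A, e.app a ≫ ε.app a = 𝟙 a

/-- The component at `a` of `τ̃ = mH ∘ Hτ ∘ δH : HH ⟶ HH`. -/
def tauTilde (H : A ⥤ A) (m : H ⋙ H ⟶ H) (δ : H ⟶ H ⋙ H)
    (τ : H ⋙ H ⟶ H ⋙ H) (a : A) : H.obj (H.obj a) ⟶ H.obj (H.obj a) :=
  δ.app (H.obj a) ≫ H.map (τ.app a) ≫ m.app (H.obj a)

namespace TauBimonad

variable {H : A ⥤ A}

-- Naturality squares with `H ⋙ H` unfolded and explicit objects, so that `rw` matches them in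
-- goals written with `H.obj (H.obj a)` rather than `(H ⋙ H).obj a`.
theorem comul_naturality (δ : H ⟶ H ⋙ H) (X Y : A) (f : X ⟶ Y) :
    H.map f ≫ δ.app Y = δ.app X ≫ H.map (H.map f) :=
  δ.naturality f

theorem mul_naturality (m : H ⋙ H ⟶ H) (X Y : A) (f : X ⟶ Y) :
    H.map (H.map f) ≫ m.app Y = m.app X ≫ H.map f :=
  m.naturality f

theorem entwining_naturality (τ : H ⋙ H ⟶ H ⋙ H) (X Y : A) (f : X ⟶ Y) :
    H.map (H.map f) ≫ τ.app Y = τ.app X ≫ H.map (H.map f) :=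
  τ.naturality f

theorem unit_naturality (e : 𝟭 A ⟶ H) (X Y : A) (f : X ⟶ Y) :
    f ≫ e.app Y = e.app X ≫ H.map f :=
  e.naturality f

theorem counit_naturality (ε : H ⟶ 𝟭 A) (X Y : A) (f : X ⟶ Y) :
    H.map f ≫ ε.app Y = ε.app X ≫ f :=
  ε.naturality f

variable {m : H ⋙ H ⟶ H} {e : 𝟭 A ⟶ H} {δ : H ⟶ H ⋙ H} {ε : H ⟶ 𝟭 A} {τ : H ⋙ H ⟶ H ⋙ H}

theorem unit_comp_tauTilde
    (unit_comonad : ∀ a, e.app a ≫ δ.app a = e.app a ≫ e.app (H.obj a))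
    (mc_unit : ∀ a, e.app (H.obj a) ≫ τ.app a = H.map (e.app a))
    (unit_left : ∀ a, e.app (H.obj a) ≫ m.app a = 𝟙 (H.obj a)) (a : A) :
    e.app (H.obj a) ≫ tauTilde H m δ τ a = H.map (e.app a) := by
  simp only [tauTilde]
  slice_lhs 1 2 => rw [unit_comonad]
  slice_lhs 2 3 => rw [← unit_naturality e (H.obj (H.obj a)) (H.obj (H.obj a)) (τ.app a)]
  slice_lhs 1 2 => rw [mc_unit]
  slice_lhs 2 3 => rw [unit_left]
  exact Category.comp_id _

theorem tauTilde_comp_counit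
    (counit_monad : ∀ a, m.app a ≫ ε.app a = H.map (ε.app a) ≫ ε.app a)
    (mc_counit : ∀ a, τ.app a ≫ ε.app (H.obj a) = H.map (ε.app a))
    (counit_left : ∀ a, δ.app a ≫ ε.app (H.obj a) = 𝟙 (H.obj a)) (a : A) :
    tauTilde H m δ τ a ≫ ε.app (H.obj a) = H.map (ε.app a) := by
  simp only [tauTilde, Category.assoc]
  slice_lhs 3 4 => rw [counit_monad]
  slice_lhs 2 3 => rw [← H.map_comp, mc_counit]
  slice_lhs 2 3 => rw [counit_naturality ε (H.obj (H.obj a)) (H.obj a) (H.map (ε.app a))]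
  slice_lhs 1 2 => rw [counit_left]
  exact Category.id_comp _

theorem tauTilde_comp_comul
    (compat : ∀ a, m.app a ≫ δ.app a
      = δ.app (H.obj a) ≫ H.map (H.map (δ.app a)) ≫ H.map (τ.app (H.obj a))
          ≫ m.app (H.obj (H.obj a)) ≫ H.map (m.app a))
    (coassoc : ∀ a, δ.app a ≫ H.map (δ.app a) = δ.app a ≫ δ.app (H.obj a))
    (mc_delta : ∀ a, τ.app a ≫ δ.app (H.obj a)
      = H.map (δ.app a) ≫ τ.app (H.obj a) ≫ H.map (τ.app a))
    (cm_delta : ∀ a, τ.app a ≫ H.map (δ.app a)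
      = δ.app (H.obj a) ≫ H.map (τ.app a) ≫ τ.app (H.obj a)) (a : A) :
    tauTilde H m δ τ a ≫ δ.app (H.obj a)
      = H.map (δ.app a) ≫ tauTilde H m δ τ (H.obj a) ≫ H.map (tauTilde H m δ τ a) := by
  simp only [tauTilde, Functor.map_comp, Category.assoc]
  slice_lhs 3 4 => rw [compat]
  slice_lhs 2 3 => rw [comul_naturality δ (H.obj (H.obj a)) (H.obj (H.obj a)) (τ.app a)]
  slice_lhs 1 2 => rw [← coassoc]
  slice_lhs 3 4 => rw [← H.map_comp, ← H.map_comp, mc_delta, H.map_comp, H.map_comp,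
    H.map_comp, H.map_comp]
  slice_lhs 5 6 => rw [← H.map_comp,
    entwining_naturality τ (H.obj (H.obj a)) (H.obj (H.obj a)) (τ.app a), H.map_comp]
  slice_lhs 6 7 => rw [mul_naturality m (H.obj (H.obj (H.obj a))) (H.obj (H.obj (H.obj a)))
    (H.map (τ.app a))]
  slice_rhs 4 5 => rw [← mul_naturality m (H.obj (H.obj a)) (H.obj (H.obj (H.obj a)))
    (δ.app (H.obj a))]
  slice_rhs 3 4 => rw [← H.map_comp, cm_delta, H.map_comp, H.map_comp]
  slice_rhs 2 3 => rw [coassoc]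
  slice_rhs 1 2 => rw [comul_naturality δ (H.obj a) (H.obj (H.obj a)) (δ.app a)]
  slice_rhs 2 3 => rw [comul_naturality δ (H.obj (H.obj a)) (H.obj (H.obj (H.obj a)))
    (H.map (δ.app a))]
  slice_rhs 1 2 => rw [← coassoc]
  simp only [Category.assoc]

theorem mul_comp_tauTilde
    (compat : ∀ a, m.app a ≫ δ.app a
      = δ.app (H.obj a) ≫ H.map (H.map (δ.app a)) ≫ H.map (τ.app (H.obj a))
          ≫ m.app (H.obj (H.obj a)) ≫ H.map (m.app a))
    (assoc : ∀ a, H.map (m.app a) ≫ m.app a = m.app (H.obj a) ≫ m.app a)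
    (mc_mul : ∀ a, m.app (H.obj a) ≫ τ.app a
      = H.map (τ.app a) ≫ τ.app (H.obj a) ≫ H.map (m.app a))
    (cm_mul : ∀ a, H.map (m.app a) ≫ τ.app a
      = τ.app (H.obj a) ≫ H.map (τ.app a) ≫ m.app (H.obj a)) (a : A) :
    m.app (H.obj a) ≫ tauTilde H m δ τ a
      = H.map (tauTilde H m δ τ a) ≫ tauTilde H m δ τ (H.obj a) ≫ H.map (m.app a) := by
  simp only [tauTilde, Functor.map_comp, Category.assoc]
  slice_lhs 1 2 => rw [compat]
  slice_lhs 5 6 => rw [← H.map_comp, mc_mul, H.map_comp, H.map_comp]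
  slice_lhs 4 5 => rw [← mul_naturality m (H.obj (H.obj (H.obj a))) (H.obj (H.obj (H.obj a)))
    (H.map (τ.app a))]
  slice_lhs 7 8 => rw [mul_naturality m (H.obj (H.obj a)) (H.obj a) (m.app a)]
  slice_rhs 3 4 => rw [comul_naturality δ (H.obj (H.obj (H.obj a))) (H.obj (H.obj a))
    (m.app (H.obj a))]
  slice_rhs 4 5 => rw [← H.map_comp, cm_mul, H.map_comp, H.map_comp]
  slice_rhs 6 7 => rw [assoc]
  slice_rhs 5 6 => rw [mul_naturality m (H.obj (H.obj (H.obj a))) (H.obj (H.obj (H.obj a)))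
    (τ.app (H.obj a))]
  slice_rhs 2 3 => rw [comul_naturality δ (H.obj (H.obj (H.obj a))) (H.obj (H.obj (H.obj a)))
    (H.map (τ.app a))]
  slice_rhs 3 4 => rw [← H.map_comp,
    entwining_naturality τ (H.obj (H.obj a)) (H.obj (H.obj a)) (τ.app a), H.map_comp]
  slice_rhs 1 2 => rw [comul_naturality δ (H.obj (H.obj a)) (H.obj (H.obj (H.obj a)))
    (δ.app (H.obj a))]
  simp only [Category.assoc]

theorem mul_comp_comul_eq_tauTilde
    (compat : ∀ a, m.app a ≫ δ.app a
      = δ.app (H.obj a) ≫ H.map (H.map (δ.app a)) ≫ H.map (τ.app (H.obj a))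
          ≫ m.app (H.obj (H.obj a)) ≫ H.map (m.app a)) (a : A) :
    m.app a ≫ δ.app a = H.map (δ.app a) ≫ tauTilde H m δ τ (H.obj a) ≫ H.map (m.app a) := by
  rw [compat, tauTilde]
  slice_rhs 1 2 => rw [comul_naturality δ (H.obj a) (H.obj (H.obj a)) (δ.app a)]
  simp only [Category.assoc]

end TauBimonad

open TauBimonad in
/-- For a `τ`-bimonad `H`, the composite `τ̃ = mH ∘ Hτ ∘ δH` is a mixed
distributive law from the monad `(H, m, e)` to the comonad `(H, δ, ε)`; in particular
`H` is a bimonad with entwining `τ̃` (the compatibility `δ ∘ m = Hm ∘ τ̃H ∘ Hδ` holds). -/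
theorem stmt12 (H : A ⥤ A) (m : H ⋙ H ⟶ H) (e : 𝟭 A ⟶ H)
    (δ : H ⟶ H ⋙ H) (ε : H ⟶ 𝟭 A) (τ : H ⋙ H ⟶ H ⋙ H)
    (hT : IsTauBimonadOn H m e δ ε τ) :
    (∀ a : A, e.app (H.obj a) ≫ tauTilde H m δ τ a = H.map (e.app a)) ∧
    (∀ a : A, tauTilde H m δ τ a ≫ ε.app (H.obj a) = H.map (ε.app a)) ∧
    (∀ a : A, tauTilde H m δ τ a ≫ δ.app (H.obj a)
        = H.map (δ.app a) ≫ tauTilde H m δ τ (H.obj a) ≫ H.map (tauTilde H m δ τ a)) ∧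
    (∀ a : A, m.app (H.obj a) ≫ tauTilde H m δ τ a
        = H.map (tauTilde H m δ τ a) ≫ tauTilde H m δ τ (H.obj a) ≫ H.map (m.app a)) ∧
    (∀ a : A, m.app a ≫ δ.app a
        = H.map (δ.app a) ≫ tauTilde H m δ τ (H.obj a) ≫ H.map (m.app a)) :=
  ⟨unit_comp_tauTilde hT.unit_comonad hT.ent.mc_unit hT.monad.unit_left,
    tauTilde_comp_counit hT.counit_monad hT.ent.mc_counit hT.comonad.counit_left,
    tauTilde_comp_comul hT.compat hT.comonad.coassoc hT.ent.mc_delta hT.ent.cm_delta,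
    mul_comp_tauTilde hT.compat hT.monad.assoc hT.ent.mc_mul hT.ent.cm_mul,
    mul_comp_comul_eq_tauTilde hT.compat⟩
end

section
/- Let τ : HH → HH satisfy the Yang–Baxter equation. If (H, m, e) is a monad and τ is monad distributive, then (H, m∘τ, e) is again a monad, and τ is monad distributive for it as well. -/
open CategoryTheory

universe v u

variable {A : Type u} [Category.{v} A]

/-- `τ` is monad distributive for the monad `(H, m, e)`:
`τ∘eH = He`, `τ∘He = eH`, `τ∘mH = Hm∘τH∘Hτ` and `τ∘Hm = mH∘Hτ∘τH`. -/
structure IsMonadDistrib (H : A ⥤ A) (m : H ⋙ H ⟶ H) (e : 𝟭 A ⟶ H)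
    (τ : H ⋙ H ⟶ H ⋙ H) : Prop where
  unit_left : ∀ a : A, e.app (H.obj a) ≫ τ.app a = H.map (e.app a)
  unit_right : ∀ a : A, H.map (e.app a) ≫ τ.app a = e.app (H.obj a)
  mul_left : ∀ a : A, m.app (H.obj a) ≫ τ.app a
      = H.map (τ.app a) ≫ τ.app (H.obj a) ≫ H.map (m.app a)
  mul_right : ∀ a : A, H.map (m.app a) ≫ τ.app a
      = τ.app (H.obj a) ≫ H.map (τ.app a) ≫ m.app (H.obj a)

/-- If `τ : HH ⟶ HH` satisfies the Yang–Baxter equation, `(H, m, e)` is a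
monad and `τ` is monad distributive for it, then `(H, m∘τ, e)` is again a monad and `τ`
is monad distributive for it as well. -/
theorem stmt13 (H : A ⥤ A) (m : H ⋙ H ⟶ H) (e : 𝟭 A ⟶ H) (τ : H ⋙ H ⟶ H ⋙ H)
    (yb : ∀ a : A, τ.app (H.obj a) ≫ H.map (τ.app a) ≫ τ.app (H.obj a)
        = H.map (τ.app a) ≫ τ.app (H.obj a) ≫ H.map (τ.app a))
    (hM : IsMonadOn H m e) (hD : IsMonadDistrib H m e τ) :
    IsMonadOn H (τ ≫ m) e ∧ IsMonadDistrib H (τ ≫ m) e τ := by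
  constructor
  · constructor
    · intro a
      simp only [NatTrans.comp_app, Functor.map_comp, Category.assoc]
      rw [reassoc_of% (hD.mul_right a), reassoc_of% (hD.mul_left a),
        hM.assoc a, reassoc_of% (yb a)]
    · intro a
      simp only [NatTrans.comp_app]
      rw [reassoc_of% (hD.unit_left a), hM.unit_right a]
    · intro a
      simp only [NatTrans.comp_app]
      rw [reassoc_of% (hD.unit_right a), hM.unit_left a]
  · constructor
    · exact hD.unit_left
    · exact hD.unit_right
    · intro a
      simp only [NatTrans.comp_app, Functor.map_comp, Category.assoc]
      rw [hD.mul_left a, reassoc_of% (yb a)]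
    · intro a
      simp only [NatTrans.comp_app, Functor.map_comp, Category.assoc]
      rw [hD.mul_right a, reassoc_of% (yb a)]
end

section
/- Let τ : HH → HH satisfy the Yang–Baxter equation. If (H, δ, ε) is a comonad and τ is comonad distributive, then (H, τ∘δ, ε) is again a comonad, and τ is comonad distributive for it. -/
open CategoryTheory

universe v u

variable {A : Type u} [Category.{v} A]

/-- `τ` is comonad distributive for the comonad `(H, δ, ε)`:
`εH∘τ = Hε`, `Hε∘τ = εH`, `δH∘τ = Hτ∘τH∘Hδ` and `Hδ∘τ = τH∘Hτ∘δH`. -/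
structure IsComonadDistrib (H : A ⥤ A) (δ : H ⟶ H ⋙ H) (ε : H ⟶ 𝟭 A)
    (τ : H ⋙ H ⟶ H ⋙ H) : Prop where
  counit_left : ∀ a : A, τ.app a ≫ ε.app (H.obj a) = H.map (ε.app a)
  counit_right : ∀ a : A, τ.app a ≫ H.map (ε.app a) = ε.app (H.obj a)
  delta_left : ∀ a : A, τ.app a ≫ δ.app (H.obj a)
      = H.map (δ.app a) ≫ τ.app (H.obj a) ≫ H.map (τ.app a)
  delta_right : ∀ a : A, τ.app a ≫ H.map (δ.app a)
      = δ.app (H.obj a) ≫ H.map (τ.app a) ≫ τ.app (H.obj a)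

/-- If `τ : HH ⟶ HH` satisfies the Yang–Baxter equation, `(H, δ, ε)` is a
comonad and `τ` is comonad distributive for it, then `(H, τ∘δ, ε)` is again a comonad and
`τ` is comonad distributive for it. -/
theorem stmt14 (H : A ⥤ A) (δ : H ⟶ H ⋙ H) (ε : H ⟶ 𝟭 A) (τ : H ⋙ H ⟶ H ⋙ H)
    (yb : ∀ a : A, τ.app (H.obj a) ≫ H.map (τ.app a) ≫ τ.app (H.obj a)
        = H.map (τ.app a) ≫ τ.app (H.obj a) ≫ H.map (τ.app a))
    (hC : IsComonadOn H δ ε) (hD : IsComonadDistrib H δ ε τ) :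
    IsComonadOn H (δ ≫ τ) ε ∧ IsComonadDistrib H (δ ≫ τ) ε τ := by
  constructor
  · constructor
    · intro a
      simp only [NatTrans.comp_app, Functor.map_comp, Category.assoc]
      rw [reassoc_of% hD.delta_right a, reassoc_of% hD.delta_left a,
        ← yb a, ← reassoc_of% hC.coassoc a]
    · intro a
      simp only [NatTrans.comp_app, Category.assoc]
      rw [hD.counit_left a, hC.counit_right a]
    · intro a
      simp only [NatTrans.comp_app, Category.assoc]
      rw [hD.counit_right a, hC.counit_left a]
  · constructor
    · intro a
      exact hD.counit_left a
    · intro a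
      exact hD.counit_right a
    · intro a
      simp only [NatTrans.comp_app, Functor.map_comp, Category.assoc]
      rw [reassoc_of% hD.delta_left a, yb a]
    · intro a
      simp only [NatTrans.comp_app, Functor.map_comp, Category.assoc]
      rw [reassoc_of% hD.delta_right a, ← yb a]
end

section
/- Let H be a τ-bimonad with antipode S, where τ is a double entwining. Then S ∘ m = m ∘ SS ∘ τ and δ ∘ S = τ ∘ SS ∘ δ. -/
open CategoryTheory

universe v u

variable {A : Type u} [Category.{v} A]

namespace Stmt15

variable (H : A ⥤ A) (m : H ⋙ H ⟶ H) (e : 𝟭 A ⟶ H)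
  (δ : H ⟶ H ⋙ H) (ε : H ⟶ 𝟭 A) (τ : H ⋙ H ⟶ H ⋙ H) (S : H ⟶ H)

/-- Plain-typed components. -/
def ml (a : A) : H.obj (H.obj a) ⟶ H.obj a := m.app a
def el (a : A) : a ⟶ H.obj a := e.app a
def dl (a : A) : H.obj a ⟶ H.obj (H.obj a) := δ.app a
def epl (a : A) : H.obj a ⟶ a := ε.app a
def tl (a : A) : H.obj (H.obj a) ⟶ H.obj (H.obj a) := τ.app a
def sl (a : A) : H.obj a ⟶ H.obj a := S.app a

section Nat
variable {X Y : A}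

lemma natm (h : X ⟶ Y) : H.map (H.map h) ≫ ml H m Y = ml H m X ≫ H.map h :=
  m.naturality h
lemma natd (h : X ⟶ Y) : H.map h ≫ dl H δ Y = dl H δ X ≫ H.map (H.map h) :=
  δ.naturality h
lemma natt (h : X ⟶ Y) : H.map (H.map h) ≫ tl H τ Y = tl H τ X ≫ H.map (H.map h) :=
  τ.naturality h
lemma nate (h : X ⟶ Y) : h ≫ el H e Y = el H e X ≫ H.map h :=
  e.naturality h
lemma nateps (h : X ⟶ Y) : H.map h ≫ epl H ε Y = epl H ε X ≫ h :=
  ε.naturality h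
lemma natS (h : X ⟶ Y) : H.map h ≫ sl H S Y = sl H S X ≫ H.map h :=
  S.naturality h

end Nat

section Plain
variable (hT : IsTauBimonadOn H m e δ ε τ)
include hT

lemma assoc' (a : A) : H.map (ml H m a) ≫ ml H m a = ml H m (H.obj a) ≫ ml H m a :=
  hT.monad.assoc a
lemma unit_left' (a : A) : el H e (H.obj a) ≫ ml H m a = 𝟙 (H.obj a) :=
  hT.monad.unit_left a
lemma unit_right' (a : A) : H.map (el H e a) ≫ ml H m a = 𝟙 (H.obj a) :=
  hT.monad.unit_right a
lemma coassoc' (a : A) : dl H δ a ≫ H.map (dl H δ a) = dl H δ a ≫ dl H δ (H.obj a) :=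
  hT.comonad.coassoc a
lemma counit_left' (a : A) : dl H δ a ≫ epl H ε (H.obj a) = 𝟙 (H.obj a) :=
  hT.comonad.counit_left a
lemma counit_right' (a : A) : dl H δ a ≫ H.map (epl H ε a) = 𝟙 (H.obj a) :=
  hT.comonad.counit_right a
lemma mc_counit' (a : A) : tl H τ a ≫ epl H ε (H.obj a) = H.map (epl H ε a) :=
  hT.ent.mc_counit a
lemma cm_counit' (a : A) : tl H τ a ≫ H.map (epl H ε a) = epl H ε (H.obj a) :=
  hT.ent.cm_counit a
lemma mc_delta' (a : A) : tl H τ a ≫ dl H δ (H.obj a)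
    = H.map (dl H δ a) ≫ tl H τ (H.obj a) ≫ H.map (tl H τ a) :=
  hT.ent.mc_delta a
lemma cm_delta' (a : A) : tl H τ a ≫ H.map (dl H δ a)
    = dl H δ (H.obj a) ≫ H.map (tl H τ a) ≫ tl H τ (H.obj a) :=
  hT.ent.cm_delta a
lemma compat' (a : A) : ml H m a ≫ dl H δ a
    = dl H δ (H.obj a) ≫ H.map (H.map (dl H δ a)) ≫ H.map (tl H τ (H.obj a))
        ≫ ml H m (H.obj (H.obj a)) ≫ H.map (ml H m a) :=
  hT.compat a
lemma counit_monad' (a : A) : ml H m a ≫ epl H ε a = H.map (epl H ε a) ≫ epl H ε a :=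
  hT.counit_monad a
lemma mc_unit' (a : A) : el H e (H.obj a) ≫ tl H τ a = H.map (el H e a) :=
  hT.ent.mc_unit a
lemma cm_unit' (a : A) : H.map (el H e a) ≫ tl H τ a = el H e (H.obj a) :=
  hT.ent.cm_unit a
lemma mc_mul' (a : A) : ml H m (H.obj a) ≫ tl H τ a
    = H.map (tl H τ a) ≫ tl H τ (H.obj a) ≫ H.map (ml H m a) :=
  hT.ent.mc_mul a
lemma cm_mul' (a : A) : H.map (ml H m a) ≫ tl H τ a
    = tl H τ (H.obj a) ≫ H.map (tl H τ a) ≫ ml H m (H.obj a) :=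
  hT.ent.cm_mul a
lemma unit_comonad' (a : A) : el H e a ≫ dl H δ a = el H e a ≫ el H e (H.obj a) :=
  hT.unit_comonad a
lemma counit_unit' (a : A) : el H e a ≫ epl H ε a = 𝟙 a :=
  hT.counit_unit a
lemma unit_comonad2 (a : A) : el H e a ≫ dl H δ a = el H e a ≫ H.map (el H e a) :=
  (hT.unit_comonad a).trans (nate H e (el H e a))
lemma counit_monad2 (a : A) : ml H m a ≫ epl H ε a = epl H ε (H.obj a) ≫ epl H ε a :=
  (hT.counit_monad a).trans (nateps H ε (epl H ε a))
lemma compat2 (a : A) : ml H m a ≫ dl H δ a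
    = H.map (dl H δ a) ≫ dl H δ (H.obj (H.obj a)) ≫ H.map (tl H τ (H.obj a))
        ≫ H.map (H.map (ml H m a)) ≫ ml H m (H.obj a) := by
  rw [compat' H m e δ ε τ hT a, ← reassoc_of% (natd H δ (dl H δ a)),
    ← natm H m (ml H m a)]

end Plain

/-- Comultiplication of the composite comonad `H ⋙ H`. -/
def DD (a : A) : H.obj (H.obj a) ⟶ H.obj (H.obj (H.obj (H.obj a))) :=
  dl H δ (H.obj a) ≫ H.map (H.map (dl H δ a)) ≫ H.map (tl H τ (H.obj a))

/-- Convolution product on families `H(H a) ⟶ H a`. -/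
def cv (F G : ∀ a : A, H.obj (H.obj a) ⟶ H.obj a) (a : A) :
    H.obj (H.obj a) ⟶ H.obj a :=
  DD H δ τ a ≫ F (H.obj (H.obj a)) ≫ H.map (G a) ≫ ml H m a

/-- Naturality of a family. -/
def NatF (F : ∀ a : A, H.obj (H.obj a) ⟶ H.obj a) : Prop :=
  ∀ {X Y : A} (h : X ⟶ Y), H.map (H.map h) ≫ F Y = F X ≫ H.map h

/-- Unit element of the convolution monoid. -/
def uF (a : A) : H.obj (H.obj a) ⟶ H.obj a :=
  H.map (epl H ε a) ≫ epl H ε a ≫ el H e a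

variable (hT : IsTauBimonadOn H m e δ ε τ)
include hT

/-- Coassociativity of `DD`. -/
lemma DD_coassoc (a : A) :
    DD H δ τ a ≫ DD H δ τ (H.obj (H.obj a))
      = DD H δ τ a ≫ H.map (H.map (DD H δ τ a)) := by
  unfold DD
  slice_lhs 3 4 => rw [natd H δ (tl H τ (H.obj a))]
  slice_lhs 2 3 => rw [natd H δ (H.map (dl H δ a))]
  slice_lhs 1 2 => rw [← coassoc' H m e δ ε τ hT (H.obj a)]
  slice_lhs 4 5 =>
    rw [← H.map_comp, ← H.map_comp, mc_delta' H m e δ ε τ hT (H.obj a)]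
    simp only [Functor.map_comp]
  slice_lhs 3 4 =>
    rw [← H.map_comp, ← H.map_comp, ← H.map_comp, ← coassoc' H m e δ ε τ hT a]
    simp only [Functor.map_comp]
  slice_lhs 6 7 =>
    rw [← H.map_comp, natt H τ (tl H τ (H.obj a)), H.map_comp]
  simp only [Functor.map_comp]
  slice_rhs 3 4 =>
    rw [← H.map_comp, cm_delta' H m e δ ε τ hT (H.obj a)]
    simp only [Functor.map_comp]
  slice_rhs 2 3 =>
    rw [← H.map_comp, natd H δ (dl H δ a), H.map_comp]
  slice_rhs 5 6 =>
    rw [← H.map_comp, ← natt H τ (H.map (dl H δ a)), H.map_comp]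
  slice_rhs 4 5 =>
    rw [← H.map_comp, ← H.map_comp, ← natt H τ (dl H δ a)]
    simp only [Functor.map_comp]
  simp only [Category.assoc]

/-- Right counit of `DD` (inner pair). -/
lemma DD_counit_inner (a : A) :
    DD H δ τ a ≫ H.map (H.map (H.map (epl H ε a))) ≫ H.map (H.map (epl H ε a))
      = 𝟙 (H.obj (H.obj a)) := by
  unfold DD
  slice_lhs 3 4 =>
    rw [← H.map_comp, ← natt H τ (epl H ε a), H.map_comp]
  slice_lhs 4 5 =>
    rw [← H.map_comp, cm_counit' H m e δ ε τ hT a]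
  slice_lhs 2 3 =>
    rw [← H.map_comp, ← H.map_comp, counit_right' H m e δ ε τ hT a]
  simp [counit_right' H m e δ ε τ hT (H.obj a)]

/-- Left counit of `DD` (outer pair). -/
lemma DD_counit_outer (a : A) :
    DD H δ τ a ≫ H.map (epl H ε (H.obj (H.obj a))) ≫ epl H ε (H.obj (H.obj a))
      = 𝟙 (H.obj (H.obj a)) := by
  unfold DD
  slice_lhs 3 4 =>
    rw [← H.map_comp, mc_counit' H m e δ ε τ hT (H.obj a)]
  slice_lhs 2 3 =>
    rw [← H.map_comp, ← H.map_comp, counit_left' H m e δ ε τ hT a]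
  simp [counit_left' H m e δ ε τ hT (H.obj a)]

lemma cv_unit_left (G : ∀ a : A, H.obj (H.obj a) ⟶ H.obj a) (a : A) :
    cv H m δ τ (uF H e ε) G a = G a := by
  unfold cv uF
  slice_lhs 4 5 => rw [← nate H e (G a)]
  slice_lhs 5 6 => rw [unit_left' H m e δ ε τ hT a]
  slice_lhs 1 3 => rw [DD_counit_outer H m e δ ε τ hT a]
  simp

lemma cv_unit_right (F : ∀ a : A, H.obj (H.obj a) ⟶ H.obj a) (hF : NatF H F) (a : A) :
    cv H m δ τ F (uF H e ε) a = F a := by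
  unfold cv uF
  simp only [Functor.map_comp]
  slice_lhs 5 6 => rw [unit_right' H m e δ ε τ hT a]
  slice_lhs 3 4 => rw [← H.map_comp]
  slice_lhs 2 3 => rw [← hF (H.map (epl H ε a) ≫ epl H ε a)]
  slice_lhs 1 2 =>
    simp only [Functor.map_comp]
  slice_lhs 1 3 => rw [DD_counit_inner H m e δ ε τ hT a]
  simp

lemma cv_assoc (F G K : ∀ a : A, H.obj (H.obj a) ⟶ H.obj a) (hF : NatF H F) (a : A) :
    cv H m δ τ (cv H m δ τ F G) K a = cv H m δ τ F (cv H m δ τ G K) a := by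
  conv_lhs => rw [cv]; rw [cv]
  conv_rhs => rw [cv]; rw [cv]
  simp only [Functor.map_comp]
  slice_rhs 2 3 => rw [← hF (DD H δ τ a)]
  slice_rhs 6 7 => rw [assoc' H m e δ ε τ hT a]
  slice_rhs 5 6 => rw [natm H m (K a)]
  slice_lhs 1 2 => rw [DD_coassoc H m e δ ε τ hT a]
  simp

variable
  (hS_left : ∀ a : A, δ.app a ≫ S.app (H.obj a) ≫ m.app a = ε.app a ≫ e.app a)
  (hS_right : ∀ a : A, δ.app a ≫ H.map (S.app a) ≫ m.app a = ε.app a ≫ e.app a)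

section SPlain
omit hT
lemma hSL (hS_left : ∀ a : A, δ.app a ≫ S.app (H.obj a) ≫ m.app a = ε.app a ≫ e.app a)
    (a : A) : dl H δ a ≫ sl H S (H.obj a) ≫ ml H m a = epl H ε a ≫ el H e a :=
  hS_left a
lemma hSR (hS_right : ∀ a : A, δ.app a ≫ H.map (S.app a) ≫ m.app a = ε.app a ≫ e.app a)
    (a : A) : dl H δ a ≫ H.map (sl H S a) ≫ ml H m a = epl H ε a ≫ el H e a :=
  hS_right a
end SPlain

include hS_left hS_right

lemma cv_f_m (a : A) :
    cv H m δ τ (fun a => ml H m a ≫ sl H S a) (fun a => ml H m a) a = uF H e ε a := by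
  unfold cv uF DD
  beta_reduce
  slice_lhs 5 6 => rw [← natS H S (ml H m a)]
  slice_lhs 1 5 => rw [← compat' H m e δ ε τ hT a]
  slice_lhs 2 4 => rw [hSL H m e δ ε S hS_left a]
  slice_lhs 1 2 => rw [counit_monad' H m e δ ε τ hT a]
  simp

lemma cv_m_g (a : A) :
    cv H m δ τ (fun a => ml H m a)
      (fun a => tl H τ a ≫ H.map (sl H S a) ≫ sl H S (H.obj a) ≫ ml H m a) a
      = uF H e ε a := by
  unfold cv uF DD
  beta_reduce
  have E1 := natm H m (tl H τ a ≫ H.map (sl H S a) ≫ sl H S (H.obj a) ≫ ml H m a)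
  rw [← reassoc_of% E1]
  simp only [Functor.map_comp, Category.assoc]
  have E3 := congrArg H.map (mc_delta' H m e δ ε τ hT a)
  simp only [Functor.map_comp] at E3
  rw [← reassoc_of% E3]
  rw [← assoc' H m e δ ε τ hT a]
  have E4 := congrArg H.map (assoc' H m e δ ε τ hT a)
  simp only [Functor.map_comp] at E4
  rw [reassoc_of% E4]
  have E5 := congrArg H.map (natd H δ (sl H S a))
  simp only [Functor.map_comp] at E5
  rw [← reassoc_of% E5]
  have E6 := congrArg H.map (hSR H m e δ ε S hS_right (H.obj a))
  simp only [Functor.map_comp] at E6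
  rw [reassoc_of% E6]
  have E7 : H.map (el H e (H.obj a)) ≫ H.map (ml H m a) = 𝟙 (H.obj (H.obj a)) := by
    rw [← H.map_comp, unit_left' H m e δ ε τ hT a, H.map_id]
  rw [reassoc_of% E7]
  have E8 := congrArg H.map (nateps H ε (sl H S a))
  simp only [Functor.map_comp] at E8
  rw [reassoc_of% E8]
  have E9 := congrArg H.map (mc_counit' H m e δ ε τ hT a)
  simp only [Functor.map_comp] at E9
  rw [reassoc_of% E9]
  rw [← reassoc_of% (natd H δ (epl H ε a))]
  rw [hSR H m e δ ε S hS_right a]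

lemma part1 (a : A) : ml H m a ≫ sl H S a
    = tl H τ a ≫ H.map (sl H S a) ≫ sl H S (H.obj a) ≫ ml H m a := by
  have hf : NatF H (fun a => ml H m a ≫ sl H S a) := by
    intro X Y h
    beta_reduce
    rw [← Category.assoc, natm H m h, Category.assoc, natS H S h, ← Category.assoc]
  have congr_right : ∀ (F G G' : ∀ a : A, H.obj (H.obj a) ⟶ H.obj a),
      G a = G' a → cv H m δ τ F G a = cv H m δ τ F G' a := by
    intro F G G' h; unfold cv; rw [h]
  have congr_left : ∀ (F F' G : ∀ a : A, H.obj (H.obj a) ⟶ H.obj a),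
      F (H.obj (H.obj a)) = F' (H.obj (H.obj a))
        → cv H m δ τ F G a = cv H m δ τ F' G a := by
    intro F F' G h; unfold cv; rw [h]
  calc (fun a => ml H m a ≫ sl H S a) a
      = cv H m δ τ (fun a => ml H m a ≫ sl H S a) (uF H e ε) a :=
        (cv_unit_right H m e δ ε τ hT _ hf a).symm
    _ = cv H m δ τ (fun a => ml H m a ≫ sl H S a)
        (cv H m δ τ (fun a => ml H m a)
          (fun a => tl H τ a ≫ H.map (sl H S a) ≫ sl H S (H.obj a) ≫ ml H m a)) a :=
        congr_right _ _ _ (cv_m_g H m e δ ε τ S hT hS_left hS_right a).symm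
    _ = cv H m δ τ (cv H m δ τ (fun a => ml H m a ≫ sl H S a) (fun a => ml H m a))
        (fun a => tl H τ a ≫ H.map (sl H S a) ≫ sl H S (H.obj a) ≫ ml H m a) a :=
        (cv_assoc H m e δ ε τ hT _ _ _ hf a).symm
    _ = cv H m δ τ (uF H e ε)
        (fun a => tl H τ a ≫ H.map (sl H S a) ≫ sl H S (H.obj a) ≫ ml H m a) a :=
        congr_left _ _ _ (cv_f_m H m e δ ε τ S hT hS_left hS_right (H.obj (H.obj a)))
    _ = (fun a => tl H τ a ≫ H.map (sl H S a) ≫ sl H S (H.obj a) ≫ ml H m a) a :=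
        cv_unit_left H m e δ ε τ hT _ a

omit hT hS_left hS_right in
lemma op_bimonad (hT : IsTauBimonadOn H m e δ ε τ) :
    IsTauBimonadOn H.op (NatTrans.op δ) (NatTrans.op ε) (NatTrans.op m)
      (NatTrans.op e) (NatTrans.op τ) := by
  refine ⟨⟨?_, ?_, ?_⟩, ⟨?_, ?_, ?_⟩, ⟨?_, ?_, ?_, ?_, ?_, ?_, ?_, ?_⟩, ?_, ?_, ?_, ?_⟩ <;>
    (intro b; apply Quiver.Hom.unop_inj;
      simp only [NatTrans.op_app, Functor.op_obj, Functor.op_map, unop_comp,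
        Quiver.Hom.unop_op, Opposite.unop_op, unop_id, Category.assoc]) <;>
    first
      | exact coassoc' H m e δ ε τ hT b.unop
      | exact counit_left' H m e δ ε τ hT b.unop
      | exact counit_right' H m e δ ε τ hT b.unop
      | exact assoc' H m e δ ε τ hT b.unop
      | exact unit_left' H m e δ ε τ hT b.unop
      | exact unit_right' H m e δ ε τ hT b.unop
      | exact mc_counit' H m e δ ε τ hT b.unop
      | exact mc_unit' H m e δ ε τ hT b.unop
      | exact mc_mul' H m e δ ε τ hT b.unop
      | exact mc_delta' H m e δ ε τ hT b.unop
      | exact cm_counit' H m e δ ε τ hT b.unop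
      | exact cm_unit' H m e δ ε τ hT b.unop
      | exact cm_mul' H m e δ ε τ hT b.unop
      | exact cm_delta' H m e δ ε τ hT b.unop
      | exact compat2 H m e δ ε τ hT b.unop
      | exact unit_comonad2 H m e δ ε τ hT b.unop
      | exact counit_monad2 H m e δ ε τ hT b.unop
      | exact counit_unit' H m e δ ε τ hT b.unop

lemma part2 (a : A) : sl H S a ≫ dl H δ a
    = dl H δ a ≫ H.map (sl H S a) ≫ sl H S (H.obj a) ≫ tl H τ a := by
  have hSL' : ∀ b : Aᵒᵖ, (NatTrans.op m).app b ≫ (NatTrans.op S).app (H.op.obj b)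
      ≫ (NatTrans.op δ).app b = (NatTrans.op e).app b ≫ (NatTrans.op ε).app b := by
    intro b
    apply Quiver.Hom.unop_inj
    simp only [NatTrans.op_app, Functor.op_obj, unop_comp, Quiver.Hom.unop_op,
      Category.assoc]
    exact hSL H m e δ ε S hS_left b.unop
  have hSR' : ∀ b : Aᵒᵖ, (NatTrans.op m).app b ≫ H.op.map ((NatTrans.op S).app b)
      ≫ (NatTrans.op δ).app b = (NatTrans.op e).app b ≫ (NatTrans.op ε).app b := by
    intro b
    apply Quiver.Hom.unop_inj
    simp only [NatTrans.op_app, Functor.op_obj, Functor.op_map, unop_comp,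
      Quiver.Hom.unop_op, Category.assoc]
    exact hSR H m e δ ε S hS_right b.unop
  have P := part1 H.op (NatTrans.op δ) (NatTrans.op ε) (NatTrans.op m)
    (NatTrans.op e) (NatTrans.op τ) (NatTrans.op S)
    (op_bimonad H m e δ ε τ hT) hSL' hSR' (Opposite.op a)
  have P2 := congrArg Quiver.Hom.unop P
  simp only [ml, tl, sl, dl, NatTrans.op_app, Functor.op_obj, Functor.op_map,
    unop_comp, Quiver.Hom.unop_op, Opposite.unop_op, Category.assoc] at P2
  calc sl H S a ≫ dl H δ a
      = dl H δ a ≫ sl H S (H.obj a) ≫ H.map (sl H S a) ≫ tl H τ a := P2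
    _ = dl H δ a ≫ H.map (sl H S a) ≫ sl H S (H.obj a) ≫ tl H τ a := by
        rw [← reassoc_of% (natS H S (sl H S a))]

end Stmt15

/-- Let `H` be a `τ`-bimonad with antipode `S`. Then `S∘m = m∘SS∘τ` and
`δ∘S = τ∘SS∘δ` (where `SS` is the horizontal composite of `S` with itself). -/
theorem stmt15 (H : A ⥤ A) (m : H ⋙ H ⟶ H) (e : 𝟭 A ⟶ H)
    (δ : H ⟶ H ⋙ H) (ε : H ⟶ 𝟭 A) (τ : H ⋙ H ⟶ H ⋙ H)
    (hT : IsTauBimonadOn H m e δ ε τ) (S : H ⟶ H)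
    (hS_left : ∀ a : A, δ.app a ≫ S.app (H.obj a) ≫ m.app a = ε.app a ≫ e.app a)
    (hS_right : ∀ a : A, δ.app a ≫ H.map (S.app a) ≫ m.app a = ε.app a ≫ e.app a) :
    (∀ a : A, m.app a ≫ S.app a
        = τ.app a ≫ H.map (S.app a) ≫ S.app (H.obj a) ≫ m.app a) ∧
    (∀ a : A, S.app a ≫ δ.app a
        = δ.app a ≫ H.map (S.app a) ≫ S.app (H.obj a) ≫ τ.app a) := by
  constructor
  · intro a
    exact Stmt15.part1 H m e δ ε τ S hT hS_left hS_right a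
  · intro a
    exact Stmt15.part2 H m e δ ε τ S hT hS_left hS_right a
end

section
/- Let H be a τ-bimonad with antipode S such that τ∘HS = SH∘τ and τ∘SH = HS∘τ. Then S is a monad morphism from (H, m, e) to (H, m∘τ, e) and a comonad morphism from (H, δ, ε) to (H, τ∘δ, ε); that is, S∘m = m∘τ∘SS, S∘e = e, δ∘S = SS∘τ∘δ, and ε∘S = ε. -/
open CategoryTheory

universe v u

variable {A : Type u} [Category.{v} A]

/-- Let `H` be a `τ`-bimonad with antipode `S` such that `τ∘HS = SH∘τ` and
`τ∘SH = HS∘τ`. Then `S` is a monad morphism `(H, m, e) ⟶ (H, m∘τ, e)` and a comonad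
morphism `(H, δ, ε) ⟶ (H, τ∘δ, ε)`: `S∘m = m∘τ∘SS`, `S∘e = e`, `δ∘S = SS∘τ∘δ`,
`ε∘S = ε`. -/
theorem stmt16 (H : A ⥤ A) (m : H ⋙ H ⟶ H) (e : 𝟭 A ⟶ H)
    (δ : H ⟶ H ⋙ H) (ε : H ⟶ 𝟭 A) (τ : H ⋙ H ⟶ H ⋙ H)
    (hT : IsTauBimonadOn H m e δ ε τ) (S : H ⟶ H)
    (hS_left : ∀ a : A, δ.app a ≫ S.app (H.obj a) ≫ m.app a = ε.app a ≫ e.app a)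
    (hS_right : ∀ a : A, δ.app a ≫ H.map (S.app a) ≫ m.app a = ε.app a ≫ e.app a)
    (hcomm₁ : ∀ a : A, H.map (S.app a) ≫ τ.app a = τ.app a ≫ S.app (H.obj a))
    (hcomm₂ : ∀ a : A, S.app (H.obj a) ≫ τ.app a = τ.app a ≫ H.map (S.app a)) :
    (∀ a : A, m.app a ≫ S.app a
        = H.map (S.app a) ≫ S.app (H.obj a) ≫ τ.app a ≫ m.app a) ∧
    (∀ a : A, e.app a ≫ S.app a = e.app a) ∧
    (∀ a : A, S.app a ≫ δ.app a
        = δ.app a ≫ τ.app a ≫ H.map (S.app a) ≫ S.app (H.obj a)) ∧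
    (∀ a : A, S.app a ≫ ε.app a = ε.app a) := by
  obtain ⟨⟨mas, mul, mur⟩, ⟨dco, dcl, dcr⟩, ⟨tmu, tmc, tmd, tmm, tcu, tcc, tcd, tcm⟩,
    compat, cmo, uco, cuu⟩ := hT
  have mnat : ∀ {X Y : A} (f : X ⟶ Y), H.map (H.map f) ≫ m.app Y = m.app X ≫ H.map f :=
    fun f => m.naturality f
  have tnat : ∀ {X Y : A} (f : X ⟶ Y),
      H.map (H.map f) ≫ τ.app Y = τ.app X ≫ H.map (H.map f) := fun f => τ.naturality f
  have dnat : ∀ {X Y : A} (f : X ⟶ Y), H.map f ≫ δ.app Y = δ.app X ≫ H.map (H.map f) :=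
    fun f => δ.naturality f
  have xnat : ∀ {X Y : A} (f : X ⟶ Y), H.map f ≫ ε.app Y = ε.app X ≫ f :=
    fun f => ε.naturality f
  have snat : ∀ {X Y : A} (f : X ⟶ Y), H.map f ≫ S.app Y = S.app X ≫ H.map f :=
    fun f => S.naturality f
  have enat : ∀ {X Y : A} (f : X ⟶ Y), f ≫ e.app Y = e.app X ≫ H.map f :=
    fun f => e.naturality f
  -- PART 2 : e ≫ S = e
  have goal2 : ∀ a : A, e.app a ≫ S.app a = e.app a := by
    intro a
    calc e.app a ≫ S.app a
        = e.app a ≫ S.app a ≫ e.app (H.obj a) ≫ m.app a := by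
          rw [mul a]
          simp only [CategoryTheory.Functor.id_obj, Category.comp_id]
      _ = e.app a ≫ e.app (H.obj a) ≫ H.map (S.app a) ≫ m.app a := by
          rw [reassoc_of% (enat (S.app a))]
      _ = e.app a ≫ δ.app a ≫ H.map (S.app a) ≫ m.app a := by
          rw [← reassoc_of% (uco a)]
      _ = e.app a ≫ ε.app a ≫ e.app a := by rw [hS_right a]
      _ = e.app a := by
          rw [← Category.assoc, cuu a]
          simp only [CategoryTheory.Functor.id_obj, Category.id_comp]
  -- PART 4 : S ≫ ε = ε
  have goal4 : ∀ a : A, S.app a ≫ ε.app a = ε.app a := by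
    intro a
    symm
    calc ε.app a
        = (ε.app a ≫ e.app a) ≫ ε.app a := by
          rw [Category.assoc, cuu a]
          simp only [CategoryTheory.Functor.id_obj, Category.comp_id]
      _ = (δ.app a ≫ S.app (H.obj a) ≫ m.app a) ≫ ε.app a := by rw [hS_left a]
      _ = δ.app a ≫ S.app (H.obj a) ≫ H.map (ε.app a) ≫ ε.app a := by
          simp only [Category.assoc]; rw [cmo a]
      _ = δ.app a ≫ H.map (ε.app a) ≫ S.app a ≫ ε.app a := by
          rw [← reassoc_of% (snat (ε.app a))]
      _ = S.app a ≫ ε.app a := by rw [reassoc_of% (dcr a)]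
  -- alternative form of K
  have hKalt : ∀ X : A, H.map (S.app X) ≫ S.app (H.obj (X)) ≫ τ.app X ≫ m.app X
      = τ.app X ≫ S.app (H.obj (X)) ≫ H.map (S.app X) ≫ m.app X := by
    intro X
    rw [reassoc_of% (snat (S.app X)), reassoc_of% (hcomm₁ X), reassoc_of% (hcomm₂ X),
      reassoc_of% (snat (S.app X))]
  have hK'alt : ∀ X : A, τ.app X ≫ H.map (S.app X) ≫ S.app (H.obj (X))
      = S.app (H.obj (X)) ≫ H.map (S.app X) ≫ τ.app X := by
    intro X
    rw [← reassoc_of% (hcomm₂ X), ← hcomm₁ X]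
  -- P1 : F * G = u
  have hP1 : ∀ X : A, δ.app (H.obj (X)) ≫ H.map (H.map (δ.app X)) ≫ H.map (τ.app (H.obj (X)))
      ≫ H.map (H.map (m.app X)) ≫ m.app (H.obj (X)) ≫ S.app (H.obj (X)) ≫ m.app X
      = H.map (ε.app X) ≫ ε.app X ≫ e.app X := by
    intro X
    have p1 := mnat (m.app X)
    simp only [CategoryTheory.Functor.comp_obj] at p1
    rw [reassoc_of% p1, ← reassoc_of% (compat X), hS_left X, reassoc_of% (cmo X)]
  -- P2 : G * K = u
  have hP2 : ∀ X : A, δ.app (H.obj (X)) ≫ H.map (H.map (δ.app X)) ≫ H.map (τ.app (H.obj (X)))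
      ≫ H.map (H.map (H.map (S.app X))) ≫ H.map (H.map (S.app (H.obj (X)))) ≫ H.map (H.map (τ.app X)) ≫ H.map (H.map (m.app X))
      ≫ m.app (H.obj (X)) ≫ m.app X
      = H.map (ε.app X) ≫ ε.app X ≫ e.app X := by
    intro X
    have k1 := congrArg (fun z => H.map (H.map z)) (hKalt X)
    have a1 := congrArg (fun z => H.map z) (tmd X)
    have c1 := congrArg (fun z => H.map z) (mas X)
    have c2 := congrArg (fun z => H.map z) (mnat (S.app X))
    have c3 := congrArg (fun z => H.map z) (hS_right (H.obj X))
    have c4 := congrArg (fun z => H.map z) (enat (S.app X))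
    have c5 := congrArg (fun z => H.map z) (mul X)
    have d1 := congrArg (fun z => H.map z) (tmc X)
    have d2 := dnat (ε.app X)
    simp only [CategoryTheory.Functor.map_comp, CategoryTheory.Functor.map_id,
      CategoryTheory.Functor.comp_obj, CategoryTheory.Functor.id_obj,
      Category.assoc] at k1 a1 c1 c2 c3 c4 c5 d1 d2
    rw [reassoc_of% k1, ← reassoc_of% a1, ← mas X, reassoc_of% c1, reassoc_of% c2,
      reassoc_of% c3, ← reassoc_of% c4, reassoc_of% c5, reassoc_of% d1,
      ← reassoc_of% d2, hS_right X]
  -- P3 : F * u = F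
  have hP3 : ∀ a : A, δ.app (H.obj (a)) ≫ H.map (H.map (δ.app a)) ≫ H.map (τ.app (H.obj (a)))
      ≫ H.map (H.map (H.map (ε.app a))) ≫ H.map (H.map (ε.app a)) ≫ H.map (H.map (e.app a))
      ≫ m.app (H.obj (a)) ≫ S.app (H.obj (a)) ≫ m.app a
      = m.app a ≫ S.app a := by
    intro a
    have s1 := congrArg (fun z => H.map z) (tnat (ε.app a))
    have s2 := congrArg (fun z => H.map z) (tcc a)
    have s3 := congrArg (fun z => H.map (H.map z)) (dcr a)
    have s4 := mnat (e.app a)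
    have s5 := snat (e.app a)
    simp only [CategoryTheory.Functor.map_comp, CategoryTheory.Functor.map_id,
      CategoryTheory.Functor.comp_obj, CategoryTheory.Functor.id_obj,
      Category.assoc] at s1 s2 s3 s4 s5
    rw [← reassoc_of% s1, reassoc_of% s2, reassoc_of% s3, reassoc_of% (dcr (H.obj a)),
      reassoc_of% s4, reassoc_of% s5, mur a]
    simp only [CategoryTheory.Functor.id_obj, Category.comp_id]
  -- P4 : u * K = K
  have hP4 : ∀ a : A, δ.app (H.obj (a)) ≫ H.map (H.map (δ.app a)) ≫ H.map (τ.app (H.obj (a)))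
      ≫ H.map (H.map (H.map (S.app a))) ≫ H.map (H.map (S.app (H.obj (a)))) ≫ H.map (H.map (τ.app a)) ≫ H.map (H.map (m.app a))
      ≫ H.map (ε.app (H.obj (a))) ≫ ε.app (H.obj (a)) ≫ e.app (H.obj (a)) ≫ m.app a
      = H.map (S.app a) ≫ S.app (H.obj (a)) ≫ τ.app a ≫ m.app a := by
    intro a
    have k1 := xnat (H.map (S.app a) ≫ S.app (H.obj a) ≫ τ.app a ≫ m.app a)
    have k2 := congrArg (fun z => H.map z) k1
    have l1 := congrArg (fun z => H.map z) (tmc (H.obj a))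
    have l2 := congrArg (fun z => H.map (H.map z)) (dcl a)
    simp only [CategoryTheory.Functor.map_comp, CategoryTheory.Functor.map_id,
      CategoryTheory.Functor.comp_obj, CategoryTheory.Functor.id_obj,
      Category.assoc] at k1 k2 l1 l2
    rw [mul a]
    simp only [CategoryTheory.Functor.id_obj, Category.comp_id]
    rw [reassoc_of% k2, k1, reassoc_of% l1,
      reassoc_of% l2, reassoc_of% (dcl (H.obj a))]
  -- Δ-coassociativity
  have hDco : ∀ a : A, δ.app (H.obj (a)) ≫ H.map (H.map (δ.app a)) ≫ H.map (τ.app (H.obj (a)))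
      ≫ δ.app (H.obj (H.obj (H.obj (a)))) ≫ H.map (H.map (δ.app (H.obj (H.obj (a))))) ≫ H.map (τ.app (H.obj (H.obj (H.obj (a)))))
      = δ.app (H.obj (a)) ≫ H.map (H.map (δ.app a)) ≫ H.map (τ.app (H.obj (a)))
      ≫ H.map (H.map (δ.app (H.obj (a)))) ≫ H.map (H.map (H.map (H.map (δ.app a)))) ≫ H.map (H.map (H.map (τ.app (H.obj (a))))) := by
    intro a
    have g1 := dnat (τ.app (H.obj a))
    have g2 := dnat (H.map (δ.app a))
    have g4 := congrArg (fun z => H.map (H.map z)) (tmd (H.obj a))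
    have g5 := congrArg (fun z => H.map z) (tnat (τ.app (H.obj a)))
    have g6 := congrArg (fun z => H.map (H.map (H.map z))) (dco a)
    have g7 := congrArg (fun z => H.map (H.map z)) (tnat (δ.app a))
    have g8 := congrArg (fun z => H.map z) (tnat (H.map (δ.app a)))
    have g9 := congrArg (fun z => H.map z) (dnat (δ.app a))
    have g10 := congrArg (fun z => H.map z) (tcd (H.obj a))
    simp only [CategoryTheory.Functor.map_comp, CategoryTheory.Functor.map_id,
      CategoryTheory.Functor.comp_obj, CategoryTheory.Functor.id_obj,
      Category.assoc] at g1 g2 g4 g5 g6 g7 g8 g9 g10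
    rw [reassoc_of% g1, reassoc_of% g2, ← reassoc_of% (dco (H.obj a)), reassoc_of% g4,
      g5, ← reassoc_of% g6, reassoc_of% g7, reassoc_of% g8, ← reassoc_of% g9,
      ← reassoc_of% g10]
  -- Δ naturality
  have hDnat : ∀ {X Y : A} (φ : X ⟶ Y),
      H.map (H.map (φ)) ≫ δ.app (H.obj (Y)) ≫ H.map (H.map (δ.app Y)) ≫ H.map (τ.app (H.obj (Y)))
      = δ.app (H.obj (X)) ≫ H.map (H.map (δ.app X)) ≫ H.map (τ.app (H.obj (X))) ≫ H.map (H.map (H.map (H.map (φ)))) := by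
    intro X Y φ
    have s0 := dnat (H.map φ)
    have s1 := congrArg (fun z => H.map (H.map z)) (dnat φ)
    have s2 := congrArg (fun z => H.map z) (tnat (H.map φ))
    simp only [CategoryTheory.Functor.map_comp, CategoryTheory.Functor.map_id,
      CategoryTheory.Functor.comp_obj, CategoryTheory.Functor.id_obj,
      Category.assoc] at s0 s1 s2
    rw [reassoc_of% s0, reassoc_of% s1, s2]
  -- P5 : associativity instance
  have hP5 : ∀ a : A, δ.app (H.obj (a)) ≫ H.map (H.map (δ.app a)) ≫ H.map (τ.app (H.obj (a)))
      ≫ H.map (H.map (δ.app (H.obj (a)))) ≫ H.map (H.map (H.map (H.map (δ.app a)))) ≫ H.map (H.map (H.map (τ.app (H.obj (a)))))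
      ≫ H.map (H.map (H.map (H.map (H.map (S.app a))))) ≫ H.map (H.map (H.map (H.map (S.app (H.obj (a)))))) ≫ H.map (H.map (H.map (H.map (τ.app a)))) ≫ H.map (H.map (H.map (H.map (m.app a))))
      ≫ H.map (H.map (m.app (H.obj (a)))) ≫ H.map (H.map (m.app a)) ≫ m.app (H.obj (a)) ≫ S.app (H.obj (a)) ≫ m.app a
      = δ.app (H.obj (a)) ≫ H.map (H.map (δ.app a)) ≫ H.map (τ.app (H.obj (a)))
      ≫ H.map (H.map (H.map (S.app a))) ≫ H.map (H.map (S.app (H.obj (a)))) ≫ H.map (H.map (τ.app a)) ≫ H.map (H.map (m.app a))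
      ≫ δ.app (H.obj (H.obj (a))) ≫ H.map (H.map (δ.app (H.obj (a)))) ≫ H.map (τ.app (H.obj (H.obj (a))))
      ≫ H.map (H.map (m.app (H.obj (a)))) ≫ m.app (H.obj (H.obj (a))) ≫ S.app (H.obj (H.obj (a))) ≫ m.app (H.obj (a)) ≫ m.app a := by
    intro a
    have p1 := mnat (m.app a)
    have p2 := snat (m.app a)
    have hh := hDnat (H.map (S.app a) ≫ S.app (H.obj a) ≫ τ.app a ≫ m.app a)
    simp only [CategoryTheory.Functor.map_comp, CategoryTheory.Functor.map_id,
      CategoryTheory.Functor.comp_obj, CategoryTheory.Functor.id_obj,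
      Category.assoc] at p1 p2 hh
    rw [reassoc_of% p1, reassoc_of% p2, mas a, ← reassoc_of% (hDco a), ← reassoc_of% hh]
  -- PART 1 assembly
  have goal1 : ∀ a : A, m.app a ≫ S.app a
      = H.map (S.app a) ≫ S.app (H.obj a) ≫ τ.app a ≫ m.app a := by
    intro a
    have e2 := congrArg (fun z => H.map (H.map z)) (hP2 a).symm
    simp only [CategoryTheory.Functor.map_comp, Category.assoc] at e2
    calc m.app a ≫ S.app a
        = δ.app (H.obj (a)) ≫ H.map (H.map (δ.app a)) ≫ H.map (τ.app (H.obj (a)))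
          ≫ H.map (H.map (H.map (ε.app a))) ≫ H.map (H.map (ε.app a)) ≫ H.map (H.map (e.app a))
          ≫ m.app (H.obj (a)) ≫ S.app (H.obj (a)) ≫ m.app a := (hP3 a).symm
      _ = δ.app (H.obj (a)) ≫ H.map (H.map (δ.app a)) ≫ H.map (τ.app (H.obj (a)))
          ≫ H.map (H.map (δ.app (H.obj (a)))) ≫ H.map (H.map (H.map (H.map (δ.app a)))) ≫ H.map (H.map (H.map (τ.app (H.obj (a)))))
          ≫ H.map (H.map (H.map (H.map (H.map (S.app a))))) ≫ H.map (H.map (H.map (H.map (S.app (H.obj (a)))))) ≫ H.map (H.map (H.map (H.map (τ.app a)))) ≫ H.map (H.map (H.map (H.map (m.app a))))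
          ≫ H.map (H.map (m.app (H.obj (a)))) ≫ H.map (H.map (m.app a))
          ≫ m.app (H.obj (a)) ≫ S.app (H.obj (a)) ≫ m.app a := by rw [reassoc_of% e2]
      _ = δ.app (H.obj (a)) ≫ H.map (H.map (δ.app a)) ≫ H.map (τ.app (H.obj (a)))
          ≫ H.map (H.map (H.map (S.app a))) ≫ H.map (H.map (S.app (H.obj (a)))) ≫ H.map (H.map (τ.app a)) ≫ H.map (H.map (m.app a))
          ≫ δ.app (H.obj (H.obj (a))) ≫ H.map (H.map (δ.app (H.obj (a)))) ≫ H.map (τ.app (H.obj (H.obj (a))))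
          ≫ H.map (H.map (m.app (H.obj (a)))) ≫ m.app (H.obj (H.obj (a))) ≫ S.app (H.obj (H.obj (a)))
          ≫ m.app (H.obj (a)) ≫ m.app a := hP5 a
      _ = δ.app (H.obj (a)) ≫ H.map (H.map (δ.app a)) ≫ H.map (τ.app (H.obj (a)))
          ≫ H.map (H.map (H.map (S.app a))) ≫ H.map (H.map (S.app (H.obj (a)))) ≫ H.map (H.map (τ.app a)) ≫ H.map (H.map (m.app a))
          ≫ H.map (ε.app (H.obj (a))) ≫ ε.app (H.obj (a)) ≫ e.app (H.obj (a)) ≫ m.app a := by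
            rw [reassoc_of% (hP1 (H.obj a))]
      _ = H.map (S.app a) ≫ S.app (H.obj a) ≫ τ.app a ≫ m.app a := hP4 a
  -- ============== PART 3 ==============
  -- K' naturality
  have hK'nat : ∀ {X Y : A} (φ : X ⟶ Y),
      H.map (φ) ≫ δ.app Y ≫ τ.app Y ≫ H.map (S.app Y) ≫ S.app (H.obj (Y))
      = δ.app X ≫ τ.app X ≫ H.map (S.app X) ≫ S.app (H.obj (X)) ≫ H.map (H.map (φ)) := by
    intro X Y φ
    have s1 := congrArg (fun z => H.map z) (snat φ)
    simp only [CategoryTheory.Functor.map_comp, CategoryTheory.Functor.comp_obj,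
      CategoryTheory.Functor.id_obj] at s1
    rw [reassoc_of% (dnat φ), reassoc_of% (tnat φ), reassoc_of% s1, snat (H.map φ)]
  -- right unit part of composite monad
  have hMU : ∀ X : A, H.map (H.map (e.app X)) ≫ H.map (H.map (e.app (H.obj (X))))
      ≫ H.map (τ.app (H.obj (X))) ≫ m.app (H.obj (H.obj (X))) ≫ H.map (m.app X) = 𝟙 (H.obj (H.obj (X))) := by
    intro X
    have s1 := congrArg (fun z => H.map z) (tcu (H.obj X))
    have s2 := congrArg (fun z => H.map z) (mur X)
    simp only [CategoryTheory.Functor.map_comp, CategoryTheory.Functor.map_id,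
      CategoryTheory.Functor.comp_obj, CategoryTheory.Functor.id_obj] at s1 s2
    rw [reassoc_of% s1, reassoc_of% (mur (H.obj (H.obj X)))]
    exact s2
  -- left unit part of composite monad
  have hMU2 : ∀ X : A, e.app (H.obj (H.obj (X))) ≫ e.app (H.obj (H.obj (H.obj (X))))
      ≫ H.map (τ.app (H.obj (X))) ≫ m.app (H.obj (H.obj (X))) ≫ H.map (m.app X) = 𝟙 (H.obj (H.obj (X))) := by
    intro X
    have s1 := enat (τ.app (H.obj X))
    have s2 := congrArg (fun z => H.map z) (mul X)
    simp only [CategoryTheory.Functor.map_comp, CategoryTheory.Functor.map_id,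
      CategoryTheory.Functor.comp_obj, CategoryTheory.Functor.id_obj] at s1 s2
    rw [← reassoc_of% s1, reassoc_of% (mul (H.obj (H.obj X))),
      reassoc_of% (tmu (H.obj X))]
    exact s2
  -- Q1 : G' ⋆ P = u'
  have hQ1 : ∀ a : A, δ.app a ≫ H.map (S.app a) ≫ H.map (δ.app a) ≫ δ.app (H.obj (H.obj (a)))
      ≫ H.map (τ.app (H.obj (a))) ≫ m.app (H.obj (H.obj (a))) ≫ H.map (m.app a)
      = ε.app a ≫ e.app a ≫ e.app (H.obj (a)) := by
    intro a
    have d1 := dnat (δ.app a)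
    simp only [CategoryTheory.Functor.comp_obj] at d1
    rw [reassoc_of% d1, ← compat a, reassoc_of% (hS_right a), uco a]
  -- Q2 : K' ⋆ G' = u'
  have hQ2 : ∀ X : A, δ.app X ≫ H.map (δ.app X) ≫ δ.app (H.obj (H.obj (X))) ≫ τ.app (H.obj (H.obj (X)))
      ≫ H.map (S.app (H.obj (H.obj (X)))) ≫ S.app (H.obj (H.obj (H.obj (X))))
      ≫ H.map (τ.app (H.obj (X))) ≫ m.app (H.obj (H.obj (X))) ≫ H.map (m.app X)
      = ε.app X ≫ e.app X ≫ e.app (H.obj (X)) := by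
    intro X
    have b2 := snat (S.app (H.obj (H.obj X)))
    have b3 := snat (m.app (H.obj X))
    have b6 := congrArg (fun z => H.map z) (hS_left (H.obj X))
    have b7 := snat (e.app (H.obj X))
    have b9 := enat (m.app X)
    simp only [CategoryTheory.Functor.map_comp, CategoryTheory.Functor.map_id,
      CategoryTheory.Functor.comp_obj, CategoryTheory.Functor.id_obj,
      Category.assoc] at b2 b3 b6 b7 b9
    rw [reassoc_of% (hK'alt (H.obj (H.obj X))), ← reassoc_of% (tcm (H.obj X)),
      ← reassoc_of% b2, ← reassoc_of% b3,
      reassoc_of% (dco X), ← reassoc_of% (dco (H.obj X)), reassoc_of% b6,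
      reassoc_of% b7, reassoc_of% (tcu (H.obj X)),
      ← b9, reassoc_of% (dcr (H.obj X)), reassoc_of% (hS_left X)]
  -- Q3 : K' ⋆ u' = K'
  have hQ3 : ∀ a : A, δ.app a ≫ H.map (ε.app a) ≫ H.map (e.app a) ≫ H.map (e.app (H.obj (a)))
      ≫ δ.app (H.obj (H.obj (a))) ≫ τ.app (H.obj (H.obj (a))) ≫ H.map (S.app (H.obj (H.obj (a)))) ≫ S.app (H.obj (H.obj (H.obj (a))))
      ≫ H.map (τ.app (H.obj (a))) ≫ m.app (H.obj (H.obj (a))) ≫ H.map (m.app a)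
      = δ.app a ≫ τ.app a ≫ H.map (S.app a) ≫ S.app (H.obj (a)) := by
    intro a
    have r1 := hK'nat (e.app (H.obj a))
    have r2 := hK'nat (e.app a)
    simp only [CategoryTheory.Functor.map_comp, CategoryTheory.Functor.comp_obj,
      CategoryTheory.Functor.id_obj] at r1 r2
    rw [reassoc_of% r1, reassoc_of% r2, hMU a]
    simp only [CategoryTheory.Functor.id_obj, Category.comp_id]
    rw [reassoc_of% (dcr a)]
  -- Q4 : u' ⋆ P = P
  have hQ4 : ∀ a : A, δ.app a ≫ H.map (S.app a) ≫ H.map (δ.app a)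
      ≫ ε.app (H.obj (H.obj (a))) ≫ e.app (H.obj (H.obj (a))) ≫ e.app (H.obj (H.obj (H.obj (a))))
      ≫ H.map (τ.app (H.obj (a))) ≫ m.app (H.obj (H.obj (a))) ≫ H.map (m.app a)
      = S.app a ≫ δ.app a := by
    intro a
    have s1 := xnat (S.app a ≫ δ.app a)
    simp only [CategoryTheory.Functor.map_comp, CategoryTheory.Functor.comp_obj,
      CategoryTheory.Functor.id_obj, Category.assoc] at s1
    rw [reassoc_of% s1, hMU2 a]
    simp only [CategoryTheory.Functor.comp_obj, Category.comp_id]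
    rw [reassoc_of% (dcl a)]
  -- m₂ associativity
  have hM2 : ∀ a : A, H.map (H.map (H.map (τ.app (H.obj (a))))) ≫ H.map (H.map (m.app (H.obj (H.obj (a))))) ≫ H.map (H.map (H.map (m.app a)))
      ≫ H.map (τ.app (H.obj (a))) ≫ m.app (H.obj (H.obj (a))) ≫ H.map (m.app a)
      = H.map (τ.app (H.obj (H.obj (H.obj (a))))) ≫ m.app (H.obj (H.obj (H.obj (H.obj (a))))) ≫ H.map (m.app (H.obj (H.obj (a))))
      ≫ H.map (τ.app (H.obj (a))) ≫ m.app (H.obj (H.obj (a))) ≫ H.map (m.app a) := by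
    intro a
    have q1 := congrArg (fun z => H.map z) (tnat (m.app a))
    have q2 := mnat (H.map (m.app a))
    have q3 := congrArg (fun z => H.map z) (mas a)
    have q4 := congrArg (fun z => H.map z) (tcm (H.obj (H.obj a)))
    have q5 := congrArg (fun z => H.map z) (tnat (τ.app (H.obj a)))
    have q6 := mnat (m.app (H.obj a))
    have q7 := congrArg (fun z => H.map z) (mnat (m.app (H.obj a)))
    have q9 := mnat (H.map (m.app (H.obj a)))
    have q10 := mnat (τ.app (H.obj (H.obj a)))
    have q11 := mnat (H.map (τ.app (H.obj a)))
    have q12 := congrArg (fun z => H.map z) (tmm (H.obj a))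
    simp only [CategoryTheory.Functor.map_comp, CategoryTheory.Functor.map_id,
      CategoryTheory.Functor.comp_obj, CategoryTheory.Functor.id_obj,
      Category.assoc] at q1 q2 q3 q4 q5 q6 q7 q9 q10 q11 q12
    rw [reassoc_of% q1, reassoc_of% q2, q3, reassoc_of% q4, reassoc_of% q5,
      ← reassoc_of% q6, ← reassoc_of% q7, reassoc_of% (mas (H.obj (H.obj a))),
      reassoc_of% q9, reassoc_of% q10, reassoc_of% q11, ← reassoc_of% q12]
  -- Q5 : associativity instance for ⋆
  have hQ5 : ∀ a : A, δ.app a ≫ H.map (δ.app a) ≫ H.map (H.map (S.app a)) ≫ H.map (H.map (δ.app a))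
      ≫ H.map (δ.app (H.obj (H.obj (a)))) ≫ H.map (H.map (τ.app (H.obj (a)))) ≫ H.map (m.app (H.obj (H.obj (a)))) ≫ H.map (H.map (m.app a))
      ≫ δ.app (H.obj (H.obj (a))) ≫ τ.app (H.obj (H.obj (a))) ≫ H.map (S.app (H.obj (H.obj (a)))) ≫ S.app (H.obj (H.obj (H.obj (a))))
      ≫ H.map (τ.app (H.obj (a))) ≫ m.app (H.obj (H.obj (a))) ≫ H.map (m.app a)
      = δ.app a ≫ H.map (S.app a) ≫ H.map (δ.app a) ≫ δ.app (H.obj (H.obj (a))) ≫ H.map (δ.app (H.obj (H.obj (a))))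
      ≫ δ.app (H.obj (H.obj (H.obj (H.obj (a))))) ≫ τ.app (H.obj (H.obj (H.obj (H.obj (a))))) ≫ H.map (S.app (H.obj (H.obj (H.obj (H.obj (a)))))) ≫ S.app (H.obj (H.obj (H.obj (H.obj (H.obj (a))))))
      ≫ H.map (τ.app (H.obj (H.obj (H.obj (a))))) ≫ m.app (H.obj (H.obj (H.obj (H.obj (a))))) ≫ H.map (m.app (H.obj (H.obj (a))))
      ≫ H.map (τ.app (H.obj (a))) ≫ m.app (H.obj (H.obj (a))) ≫ H.map (m.app a) := by
    intro a
    have r1 := hK'nat (H.map (τ.app (H.obj a)) ≫ m.app (H.obj (H.obj a)) ≫ H.map (m.app a))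
    have r4 := dnat (S.app a ≫ δ.app a)
    simp only [CategoryTheory.Functor.map_comp, CategoryTheory.Functor.map_id,
      CategoryTheory.Functor.comp_obj, CategoryTheory.Functor.id_obj,
      Category.assoc] at r1 r4
    rw [reassoc_of% r1, hM2 a, reassoc_of% r4, reassoc_of% (dco a)]
  -- PART 3 assembly
  have goal3 : ∀ a : A, S.app a ≫ δ.app a
      = δ.app a ≫ τ.app a ≫ H.map (S.app a) ≫ S.app (H.obj a) := by
    intro a
    have e1 := congrArg (fun z => H.map z) (hQ1 a).symm
    simp only [CategoryTheory.Functor.map_comp, Category.assoc] at e1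
    symm
    calc δ.app a ≫ τ.app a ≫ H.map (S.app a) ≫ S.app (H.obj a)
        = δ.app a ≫ H.map (ε.app a) ≫ H.map (e.app a) ≫ H.map (e.app (H.obj (a)))
          ≫ δ.app (H.obj (H.obj (a))) ≫ τ.app (H.obj (H.obj (a))) ≫ H.map (S.app (H.obj (H.obj (a)))) ≫ S.app (H.obj (H.obj (H.obj (a))))
          ≫ H.map (τ.app (H.obj (a))) ≫ m.app (H.obj (H.obj (a))) ≫ H.map (m.app a) := (hQ3 a).symm
      _ = δ.app a ≫ H.map (δ.app a) ≫ H.map (H.map (S.app a)) ≫ H.map (H.map (δ.app a))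
          ≫ H.map (δ.app (H.obj (H.obj (a)))) ≫ H.map (H.map (τ.app (H.obj (a)))) ≫ H.map (m.app (H.obj (H.obj (a)))) ≫ H.map (H.map (m.app a))
          ≫ δ.app (H.obj (H.obj (a))) ≫ τ.app (H.obj (H.obj (a))) ≫ H.map (S.app (H.obj (H.obj (a)))) ≫ S.app (H.obj (H.obj (H.obj (a))))
          ≫ H.map (τ.app (H.obj (a))) ≫ m.app (H.obj (H.obj (a))) ≫ H.map (m.app a) := by rw [reassoc_of% e1]
      _ = δ.app a ≫ H.map (S.app a) ≫ H.map (δ.app a) ≫ δ.app (H.obj (H.obj (a))) ≫ H.map (δ.app (H.obj (H.obj (a))))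
          ≫ δ.app (H.obj (H.obj (H.obj (H.obj (a))))) ≫ τ.app (H.obj (H.obj (H.obj (H.obj (a))))) ≫ H.map (S.app (H.obj (H.obj (H.obj (H.obj (a)))))) ≫ S.app (H.obj (H.obj (H.obj (H.obj (H.obj (a))))))
          ≫ H.map (τ.app (H.obj (H.obj (H.obj (a))))) ≫ m.app (H.obj (H.obj (H.obj (H.obj (a))))) ≫ H.map (m.app (H.obj (H.obj (a))))
          ≫ H.map (τ.app (H.obj (a))) ≫ m.app (H.obj (H.obj (a))) ≫ H.map (m.app a) := hQ5 a
      _ = δ.app a ≫ H.map (S.app a) ≫ H.map (δ.app a)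
          ≫ ε.app (H.obj (H.obj (a))) ≫ e.app (H.obj (H.obj (a))) ≫ e.app (H.obj (H.obj (H.obj (a))))
          ≫ H.map (τ.app (H.obj (a))) ≫ m.app (H.obj (H.obj (a))) ≫ H.map (m.app a) := by
            rw [reassoc_of% (hQ2 (H.obj (H.obj a)))]
      _ = S.app a ≫ δ.app a := hQ4 a
  exact ⟨goal1, goal2, goal3, goal4⟩
end

section
/- Let τ : HH → HH be a local prebraiding with τ² = 1 and H = (H, m, e, δ, ε) a τ-bimonad. Then H' = (H, m∘τ, e, τ∘δ, ε) is again a τ-bimonad. Moreover, if H has an antipode S commuting with τ in the sense τ∘HS = SH∘τ and τ∘SH = HS∘τ, then S is also an antipode for H'. -/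
open CategoryTheory

universe v u

variable {A : Type u} [Category.{v} A]

/-- Let `τ` be a local prebraiding (a double entwining satisfying the
Yang–Baxter equation) with `τ² = 1`, and let `H` be a `τ`-bimonad. Then
`H' = (H, m∘τ, e, τ∘δ, ε)` is again a `τ`-bimonad, and any antipode `S` of `H` which
commutes with `τ` (`τ∘HS = SH∘τ` and `τ∘SH = HS∘τ`) is also an antipode for `H'`. -/
theorem stmt17 (H : A ⥤ A) (m : H ⋙ H ⟶ H) (e : 𝟭 A ⟶ H)
    (δ : H ⟶ H ⋙ H) (ε : H ⟶ 𝟭 A) (τ : H ⋙ H ⟶ H ⋙ H)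
    (hT : IsTauBimonadOn H m e δ ε τ)
    (yb : ∀ a : A, τ.app (H.obj a) ≫ H.map (τ.app a) ≫ τ.app (H.obj a)
        = H.map (τ.app a) ≫ τ.app (H.obj a) ≫ H.map (τ.app a))
    (hτ2 : ∀ a : A, τ.app a ≫ τ.app a = 𝟙 (H.obj (H.obj a))) :
    IsTauBimonadOn H (τ ≫ m) e (δ ≫ τ) ε τ ∧
    ∀ S : H ⟶ H,
      (∀ a : A, δ.app a ≫ S.app (H.obj a) ≫ m.app a = ε.app a ≫ e.app a) →
      (∀ a : A, δ.app a ≫ H.map (S.app a) ≫ m.app a = ε.app a ≫ e.app a) →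
      (∀ a : A, H.map (S.app a) ≫ τ.app a = τ.app a ≫ S.app (H.obj a)) →
      (∀ a : A, S.app (H.obj a) ≫ τ.app a = τ.app a ≫ H.map (S.app a)) →
      (∀ a : A, (δ.app a ≫ τ.app a) ≫ S.app (H.obj a) ≫ τ.app a ≫ m.app a
          = ε.app a ≫ e.app a) ∧
      (∀ a : A, (δ.app a ≫ τ.app a) ≫ H.map (S.app a) ≫ τ.app a ≫ m.app a
          = ε.app a ≫ e.app a) := by
  obtain ⟨hmon, hcom, hent, hcompat, hcm, huc, hcu⟩ := hT
  have natτ : ∀ {X Y : A} (f : X ⟶ Y),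
      H.map (H.map f) ≫ τ.app Y = τ.app X ≫ H.map (H.map f) := fun f => by
    simpa using τ.naturality f
  have natδ : ∀ {X Y : A} (f : X ⟶ Y),
      H.map f ≫ δ.app Y = δ.app X ≫ H.map (H.map f) := fun f => by
    simpa using δ.naturality f
  have natm : ∀ {X Y : A} (f : X ⟶ Y),
      H.map (H.map f) ≫ m.app Y = m.app X ≫ H.map f := fun f => by
    simpa using m.naturality f
  have natε : ∀ {X Y : A} (f : X ⟶ Y),
      H.map f ≫ ε.app Y = ε.app X ≫ f := fun f => by
    simpa using ε.naturality f
  have nate : ∀ {X Y : A} (f : X ⟶ Y),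
      f ≫ e.app Y = e.app X ≫ H.map f := fun f => by
    simpa using e.naturality f
  have hτ2H : ∀ X : A, H.map (τ.app X) ≫ H.map (τ.app X) = 𝟙 (H.obj (H.obj (H.obj X))) :=
    fun X => by rw [← Functor.map_comp, hτ2]; exact H.map_id _
  have hτ2HH : ∀ X : A, H.map (H.map (τ.app X)) ≫ H.map (H.map (τ.app X))
      = 𝟙 (H.obj (H.obj (H.obj (H.obj X)))) := fun X => by
    rw [← Functor.map_comp, ← Functor.map_comp, hτ2]
    rw [show H.map (𝟙 (H.obj (H.obj X))) = 𝟙 (H.obj (H.obj (H.obj X))) from H.map_id _]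
    exact H.map_id _
  constructor
  · refine ⟨⟨?_, ?_, ?_⟩, ⟨?_, ?_, ?_⟩, ⟨?_, ?_, ?_, ?_, ?_, ?_, ?_, ?_⟩, ?_, ?_, ?_, ?_⟩
    · -- assoc
      intro a
      simp only [NatTrans.comp_app, Functor.map_comp, Category.assoc]
      conv_lhs => rw [reassoc_of% (hent.cm_mul a)]
      conv_rhs => rw [reassoc_of% (hent.mc_mul a), hmon.assoc a, reassoc_of% (yb a)]
    · -- unit_left
      intro a
      simp only [NatTrans.comp_app]
      rw [reassoc_of% (hent.mc_unit a)]
      exact hmon.unit_right a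
    · -- unit_right
      intro a
      simp only [NatTrans.comp_app]
      rw [reassoc_of% (hent.cm_unit a)]
      exact hmon.unit_left a
    · -- coassoc
      intro a
      simp only [NatTrans.comp_app, Functor.map_comp, Category.assoc]
      conv_lhs => rw [reassoc_of% (hent.cm_delta a)]
      conv_rhs => rw [reassoc_of% (hent.mc_delta a), reassoc_of% (hcom.coassoc a), yb a]
    · -- counit_left
      intro a
      simp only [NatTrans.comp_app, Category.assoc]
      rw [hent.mc_counit a]
      exact hcom.counit_right a
    · -- counit_right
      intro a
      simp only [NatTrans.comp_app, Category.assoc]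
      rw [hent.cm_counit a]
      exact hcom.counit_left a
    · -- mc_unit
      exact hent.mc_unit
    · -- mc_counit
      exact hent.mc_counit
    · -- mc_delta
      intro a
      simp only [NatTrans.comp_app, Functor.map_comp, Category.assoc]
      conv_lhs => rw [reassoc_of% (hent.mc_delta a), yb a]
    · -- mc_mul
      intro a
      simp only [NatTrans.comp_app, Functor.map_comp, Category.assoc]
      conv_lhs => rw [hent.mc_mul a, reassoc_of% (yb a)]
    · -- cm_unit
      exact hent.cm_unit
    · -- cm_counit
      exact hent.cm_counit
    · -- cm_delta
      intro a
      simp only [NatTrans.comp_app, Functor.map_comp, Category.assoc]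
      conv_lhs => rw [reassoc_of% (hent.cm_delta a)]
      conv_rhs => rw [yb a]
    · -- cm_mul
      intro a
      simp only [NatTrans.comp_app, Functor.map_comp, Category.assoc]
      conv_lhs => rw [hent.cm_mul a]
      conv_rhs => rw [reassoc_of% (yb a)]
    · -- compat
      intro a
      have Hmc_mul : H.map (m.app (H.obj a)) ≫ H.map (τ.app a)
          = H.map (H.map (τ.app a)) ≫ H.map (τ.app (H.obj a)) ≫ H.map (H.map (m.app a)) := by
        simp only [← Functor.map_comp]
        rw [hent.mc_mul a]
      have Hcm_delta : H.map (τ.app a) ≫ H.map (H.map (δ.app a))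
          = H.map (δ.app (H.obj a)) ≫ H.map (H.map (τ.app a)) ≫ H.map (τ.app (H.obj a)) := by
        simp only [← Functor.map_comp]
        rw [hent.cm_delta a]
      have h9 : H.map (δ.app (H.obj a)) = τ.app (H.obj a) ≫ δ.app (H.obj (H.obj a))
          ≫ H.map (τ.app (H.obj a)) ≫ τ.app (H.obj (H.obj a)) := by
        rw [reassoc_of% (hent.mc_delta (H.obj a)), reassoc_of% (hτ2H (H.obj a)),
          hτ2, Category.comp_id]
      have natδδ : H.map (δ.app a) ≫ δ.app (H.obj (H.obj a))
          = δ.app (H.obj a) ≫ H.map (H.map (δ.app a)) := natδ (δ.app a)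
      have natmm : H.map (H.map (m.app a)) ≫ m.app (H.obj a)
          = m.app (H.obj (H.obj a)) ≫ H.map (m.app a) := natm (m.app a)
      have natmτ : H.map (H.map (τ.app a)) ≫ m.app (H.obj (H.obj a))
          = m.app (H.obj (H.obj a)) ≫ H.map (τ.app a) := natm (τ.app a)
      have natτδ : H.map (H.map (δ.app a)) ≫ τ.app (H.obj (H.obj a))
          = τ.app (H.obj a) ≫ H.map (H.map (δ.app a)) := natτ (δ.app a)
      have comm13 : H.map (H.map (τ.app a)) ≫ τ.app (H.obj (H.obj a))
          = τ.app (H.obj (H.obj a)) ≫ H.map (H.map (τ.app a)) := natτ (τ.app a)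
      have yb1 : τ.app (H.obj (H.obj a)) ≫ H.map (τ.app (H.obj a)) ≫ τ.app (H.obj (H.obj a))
          = H.map (τ.app (H.obj a)) ≫ τ.app (H.obj (H.obj a)) ≫ H.map (τ.app (H.obj a)) :=
        yb (H.obj a)
      have yb2 : H.map (τ.app (H.obj a)) ≫ H.map (H.map (τ.app a)) ≫ H.map (τ.app (H.obj a))
          = H.map (H.map (τ.app a)) ≫ H.map (τ.app (H.obj a)) ≫ H.map (H.map (τ.app a)) := by
        simp only [← Functor.map_comp]
        rw [yb a]
      simp only [NatTrans.comp_app, Functor.map_comp, Category.assoc]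
      conv_lhs => rw [reassoc_of% (hcompat a), hent.cm_mul a,
        reassoc_of% (hent.mc_mul (H.obj a)), reassoc_of% (hτ2H (H.obj a)),
        reassoc_of% Hmc_mul, natmm, reassoc_of% (hent.mc_delta a), reassoc_of% Hcm_delta,
        reassoc_of% h9, reassoc_of% (hτ2 (H.obj a)), reassoc_of% natδδ,
        ← reassoc_of% comm13, reassoc_of% yb1, reassoc_of% yb2, reassoc_of% yb2,
        ← reassoc_of% comm13, reassoc_of% (hτ2HH a), ← reassoc_of% yb1,
        reassoc_of% comm13]
      conv_rhs => rw [← reassoc_of% natmτ, ← reassoc_of% natτδ]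
    · -- counit_monad
      intro a
      simp only [NatTrans.comp_app, Category.assoc]
      conv_lhs => rw [hcm a, reassoc_of% (hent.cm_counit a)]
      exact (natε (ε.app a)).symm
    · -- unit_comonad
      intro a
      simp only [NatTrans.comp_app, Category.assoc]
      rw [reassoc_of% (huc a), hent.mc_unit a, nate (e.app a)]
      rfl
    · -- counit_unit
      exact hcu
  · intro S hS1 hS2 hc1 hc2
    constructor
    · intro a
      simp only [Category.assoc]
      rw [reassoc_of% (hc2 a), reassoc_of% (hτ2 a)]
      exact hS2 a
    · intro a
      simp only [Category.assoc]
      rw [reassoc_of% (hc1 a), reassoc_of% (hτ2 a)]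
      exact hS1 a
end
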